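/- arXiv:2408.17058 — 10 statements merged into one kernel-verified Lean document; each statement's English description precedes it below -/
import Mathlib

section
/- If F is a cumulative distribution function (monotone nondecreasing, right-continuous, tending to 0 at -∞ and 1 at +∞) satisfying the functional equation F(x) = p·F(x/β) + q·F(x/β + 1 - 1/β) for all real x, then F(x) = 1 for all x ≥ 1. -/
/-!
For `x ≥ 1` both points `x / β` and `x / β + 1 - 1 / β` lie to the right of `x`, so by
monotonicity `F x` is a convex combination of two values that are at least `F x`; hence
`F (x / β) = F x`. Iterating from `x = 1` gives `F (β⁻¹ ^ n) = F 1` for all `n`, and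
`β⁻¹ ^ n → ∞` forces `F 1 = 1`.
-/

open Filter Topology

lemma eq_of_le_of_le_of_eq_convexComb {p u a b : ℝ} (hp0 : 0 < p) (hp1 : p ≤ 1)
    (ha : u ≤ a) (hb : u ≤ b) (hu : u = p * a + (1 - p) * b) : a = u := by
  nlinarith [mul_nonneg (sub_nonneg.mpr hp1) (sub_nonneg.mpr hb)]

lemma le_div_add_one_sub_one_div {β x : ℝ} (hβ0 : 0 < β) (hβ1 : β ≤ 1) (hx : 1 ≤ x) :
    x ≤ x / β + 1 - 1 / β := by
  have key : x / β + 1 - 1 / β - x = (x - 1) * (1 - β) / β := by field_simp; ring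
  have := div_nonneg (mul_nonneg (sub_nonneg.mpr hx) (sub_nonneg.mpr hβ1)) hβ0.le
  linarith

lemma apply_div_eq_of_one_le {β p : ℝ} {F : ℝ → ℝ} (hβ0 : 0 < β) (hβ1 : β ≤ 1)
    (hp0 : 0 < p) (hp1 : p ≤ 1) (hmono : Monotone F)
    (hF : ∀ x, F x = p * F (x / β) + (1 - p) * F (x / β + 1 - 1 / β))
    {x : ℝ} (hx : 1 ≤ x) : F (x / β) = F x :=
  eq_of_le_of_le_of_eq_convexComb hp0 hp1
    (hmono (le_div_self (by linarith) hβ0 hβ1))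
    (hmono (le_div_add_one_sub_one_div hβ0 hβ1 hx)) (hF x)

lemma apply_inv_pow_eq_apply_one {β p : ℝ} {F : ℝ → ℝ} (hβ0 : 0 < β) (hβ1 : β ≤ 1)
    (hp0 : 0 < p) (hp1 : p ≤ 1) (hmono : Monotone F)
    (hF : ∀ x, F x = p * F (x / β) + (1 - p) * F (x / β + 1 - 1 / β)) (n : ℕ) :
    F (β⁻¹ ^ n) = F 1 := by
  induction n with
  | zero => rw [pow_zero]
  | succ n ih =>
    rw [pow_succ, ← div_eq_mul_inv,
      apply_div_eq_of_one_le hβ0 hβ1 hp0 hp1 hmono hF (one_le_pow₀ (one_le_inv₀ hβ0 |>.mpr hβ1)),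
      ih]

theorem stmt1_general (β p q : ℝ) (hβ0 : 0 < β) (hβ : β ≤ 1/2)
    (hp0 : 0 < p) (hp1 : p < 1) (hq : q = 1 - p)
    (F : ℝ → ℝ) (hmono : Monotone F)
    (htop : Filter.Tendsto F Filter.atTop (nhds 1))
    (hF : ∀ x : ℝ, F x = p * F (x / β) + q * F (x / β + 1 - 1 / β)) :
    ∀ x : ℝ, 1 ≤ x → F x = 1 := by
  subst hq
  have hβ1 : β < 1 := by linarith
  have hF1 : F 1 = 1 := by
    have hpow : Tendsto (fun n : ℕ => F (β⁻¹ ^ n)) atTop (𝓝 1) :=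
      htop.comp (tendsto_pow_atTop_atTop_of_one_lt ((one_lt_inv₀ hβ0).mpr hβ1))
    simp only [apply_inv_pow_eq_apply_one hβ0 hβ1.le hp0 hp1.le hmono hF] at hpow
    exact tendsto_nhds_unique tendsto_const_nhds hpow
  intro x hx
  exact le_antisymm (hmono.ge_of_tendsto htop x) (hF1 ▸ hmono hx)

theorem stmt1 (β p q : ℝ) (hβ0 : 0 < β) (hβ : β ≤ 1/2)
    (hp0 : 0 < p) (hp1 : p < 1) (hq : q = 1 - p)
    (F : ℝ → ℝ) (hmono : Monotone F)
    (hrc : ∀ x : ℝ, ContinuousWithinAt F (Set.Ici x) x)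
    (hbot : Filter.Tendsto F Filter.atBot (nhds 0))
    (htop : Filter.Tendsto F Filter.atTop (nhds 1))
    (hF : ∀ x : ℝ, F x = p * F (x / β) + q * F (x / β + 1 - 1 / β)) :
    ∀ x : ℝ, 1 ≤ x → F x = 1 :=
  stmt1_general β p q hβ0 hβ hp0 hp1 hq F hmono htop hF
end

section
/- If F is a cumulative distribution function satisfying the functional equation F(x) = p·F(x/β) + q·F(x/β + 1 - 1/β) for all real x, then F(x) = 0 for all x ≤ 0. -/
open Filter Topology

theorem eq_of_tendsto_atBot_of_apply_mul_eq {F : ℝ → ℝ} {a c : ℝ} (ha : 1 < a)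
    (hbot : Tendsto F atBot (𝓝 c)) (hinv : ∀ x < 0, F (a * x) = F x) {x : ℝ} (hx : x < 0) :
    F x = c := by
  have hpow : ∀ n : ℕ, F (a ^ n * x) = F x := by
    intro n
    induction n with
    | zero => simp
    | succ n ih =>
      rw [pow_succ', mul_assoc, hinv _ (mul_neg_of_pos_of_neg (by positivity) hx), ih]
  have hlim : Tendsto (fun n : ℕ => a ^ n * x) atTop atBot :=
    (tendsto_pow_atTop_atTop_of_one_lt ha).atTop_mul_const_of_neg hx
  have hconst : Tendsto (fun n : ℕ => F (a ^ n * x)) atTop (𝓝 (F x)) := by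
    simp only [hpow, tendsto_const_nhds]
  exact tendsto_nhds_unique hconst (hbot.comp hlim)

theorem two_le_one_div {β : ℝ} (hβ0 : 0 < β) (hβ : β ≤ 1 / 2) : 2 ≤ 1 / β :=
  (le_div_iff₀ hβ0).2 (by linarith)

/- On `x ≤ 0` both arguments on the right-hand side of the equation lie below `2 * x`, so the
equation and monotonicity squeeze `F x` between `F (2 * x)` and itself. -/
theorem apply_two_mul_eq_of_nonpos {β p q : ℝ} {F : ℝ → ℝ} (hβ0 : 0 < β) (hβ : β ≤ 1 / 2)
    (hp0 : 0 ≤ p) (hq0 : 0 ≤ q) (hpq : p + q = 1) (hmono : Monotone F)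
    (hF : ∀ x : ℝ, F x = p * F (x / β) + q * F (x / β + 1 - 1 / β)) {x : ℝ} (hx : x ≤ 0) :
    F (2 * x) = F x := by
  have h2 := two_le_one_div hβ0 hβ
  have hleft : x / β ≤ 2 * x := by
    rw [div_eq_mul_one_div, mul_comm 2]
    exact mul_le_mul_of_nonpos_left h2 hx
  have hright : x / β + 1 - 1 / β ≤ 2 * x := by linarith
  refine le_antisymm (hmono (by linarith)) ?_
  calc F x = p * F (x / β) + q * F (x / β + 1 - 1 / β) := hF x
    _ ≤ p * F (2 * x) + q * F (2 * x) := by gcongr <;> exact hmono ‹_›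
    _ = F (2 * x) := by rw [← add_mul, hpq, one_mul]

theorem stmt2_general (β p q : ℝ) (hβ0 : 0 < β) (hβ : β ≤ 1/2)
    (hp0 : 0 < p) (hp1 : p < 1) (hq : q = 1 - p)
    (F : ℝ → ℝ) (hmono : Monotone F)
    (hbot : Filter.Tendsto F Filter.atBot (nhds 0))
    (hF : ∀ x : ℝ, F x = p * F (x / β) + q * F (x / β + 1 - 1 / β)) :
    ∀ x : ℝ, x ≤ 0 → F x = 0 := by
  have hneg : ∀ y < 0, F y = 0 := fun y hy =>
    eq_of_tendsto_atBot_of_apply_mul_eq one_lt_two hbot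
      (fun z hz => apply_two_mul_eq_of_nonpos hβ0 hβ hp0.le (by linarith) (by linarith) hmono hF
        hz.le) hy
  intro x hx
  rcases hx.lt_or_eq with hx | rfl
  · exact hneg x hx
  · -- the second argument `1 - 1 / β` is negative, so the equation reduces to `F 0 = p * F 0`
    have h0 := hF 0
    rw [zero_div, hneg (0 + 1 - 1 / β) (by linarith [two_le_one_div hβ0 hβ]), mul_zero,
      add_zero] at h0
    have hzero : (1 - p) * F 0 = 0 := by linarith
    exact (mul_eq_zero.1 hzero).resolve_left (by linarith)

theorem stmt2 (β p q : ℝ) (hβ0 : 0 < β) (hβ : β ≤ 1/2)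
    (hp0 : 0 < p) (hp1 : p < 1) (hq : q = 1 - p)
    (F : ℝ → ℝ) (hmono : Monotone F)
    (hrc : ∀ x : ℝ, ContinuousWithinAt F (Set.Ici x) x)
    (hbot : Filter.Tendsto F Filter.atBot (nhds 0))
    (htop : Filter.Tendsto F Filter.atTop (nhds 1))
    (hF : ∀ x : ℝ, F x = p * F (x / β) + q * F (x / β + 1 - 1 / β)) :
    ∀ x : ℝ, x ≤ 0 → F x = 0 :=
  stmt2_general β p q hβ0 hβ hp0 hp1 hq F hmono hbot hF
end

section
/- If F and G are both cumulative distribution functions satisfying the functional equation H(x) = p·H(x/β) + q·H(x/β + 1 - 1/β) for all real x, then F = G. -/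
theorem stmt3 (β p q : ℝ) (hβ0 : 0 < β) (hβ : β ≤ 1/2)
    (hp0 : 0 < p) (hp1 : p < 1) (hq : q = 1 - p)
    (F G : ℝ → ℝ)
    (hFmono : Monotone F)
    (hFrc : ∀ x : ℝ, ContinuousWithinAt F (Set.Ici x) x)
    (hFbot : Filter.Tendsto F Filter.atBot (nhds 0))
    (hFtop : Filter.Tendsto F Filter.atTop (nhds 1))
    (hGmono : Monotone G)
    (hGrc : ∀ x : ℝ, ContinuousWithinAt G (Set.Ici x) x)
    (hGbot : Filter.Tendsto G Filter.atBot (nhds 0))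
    (hGtop : Filter.Tendsto G Filter.atTop (nhds 1))
    (hF : ∀ x : ℝ, F x = p * F (x / β) + q * F (x / β + 1 - 1 / β))
    (hG : ∀ x : ℝ, G x = p * G (x / β) + q * G (x / β + 1 - 1 / β)) :
    F = G := by
  have hq0 : 0 < q := by rw [hq]; linarith
  have hq1 : q < 1 := by rw [hq]; linarith
  have hβ1 : β < 1 := by linarith
  have hβ2 : (2:ℝ) ≤ 1 / β := by
    rw [le_div_iff₀ hβ0]; linarith
  set D : ℝ → ℝ := fun x => F x - G x with hDdef
  have hD : ∀ x, D x = p * D (x / β) + q * D (x / β + 1 - 1 / β) := by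
    intro x
    simp only [hDdef]
    rw [hF x, hG x]; ring
  have hF0 : ∀ x, 0 ≤ F x := fun x => hFmono.le_of_tendsto hFbot x
  have hF1 : ∀ x, F x ≤ 1 := fun x => hFmono.ge_of_tendsto hFtop x
  have hG0 : ∀ x, 0 ≤ G x := fun x => hGmono.le_of_tendsto hGbot x
  have hG1 : ∀ x, G x ≤ 1 := fun x => hGmono.ge_of_tendsto hGtop x
  have hDb : ∀ x, |D x| ≤ 1 := by
    intro x
    rw [abs_le]
    constructor <;> simp only [hDdef] <;> nlinarith [hF0 x, hF1 x, hG0 x, hG1 x]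
  have habs : ∀ a b : ℝ, |p * a + q * b| ≤ p * |a| + q * |b| := by
    intro a b
    calc |p * a + q * b| ≤ |p * a| + |q * b| := abs_add_le _ _
      _ = p * |a| + q * |b| := by
          rw [abs_mul, abs_mul, abs_of_pos hp0, abs_of_pos hq0]
  -- Tail bounds for D
  have htail_bot : ∀ ε > 0, ∃ T, T < 0 ∧ ∀ z ≤ T, |D z| ≤ ε := by
    intro ε hε
    have h : Filter.Tendsto D Filter.atBot (nhds 0) := by
      simpa using hFbot.sub hGbot
    have h2 := (Metric.tendsto_nhds.mp h) ε hε
    rw [Filter.eventually_atBot] at h2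
    obtain ⟨T, hT⟩ := h2
    refine ⟨min T (-1), lt_of_le_of_lt (min_le_right _ _) (by norm_num), fun z hz => ?_⟩
    have := hT z (le_trans hz (min_le_left _ _))
    rw [Real.dist_eq, sub_zero] at this
    exact this.le
  have htail_top : ∀ ε > 0, ∃ T, 1 < T ∧ ∀ z, T ≤ z → |D z| ≤ ε := by
    intro ε hε
    have h : Filter.Tendsto D Filter.atTop (nhds 0) := by
      simpa using hFtop.sub hGtop
    have h2 := (Metric.tendsto_nhds.mp h) ε hε
    rw [Filter.eventually_atTop] at h2
    obtain ⟨T, hT⟩ := h2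
    refine ⟨max T 2, lt_of_lt_of_le (by norm_num) (le_max_right _ _), fun z hz => ?_⟩
    have := hT z (le_trans (le_max_left _ _) hz)
    rw [Real.dist_eq, sub_zero] at this
    exact this.le
  have hβpow : Filter.Tendsto (fun n : ℕ => β ^ n) Filter.atTop (nhds 0) :=
    tendsto_pow_atTop_nhds_zero_of_lt_one hβ0.le hβ1
  have habs0 : ∀ a : ℝ, (∀ ε > 0, |a| ≤ ε) → a = 0 := by
    intro a ha
    have h0 : |a| ≤ 0 := le_of_forall_pos_le_add (by simpa using ha)
    exact abs_eq_zero.mp (le_antisymm h0 (abs_nonneg _))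
  -- D vanishes on (-∞, 0)
  have hDneg : ∀ x, x < 0 → D x = 0 := by
    intro x hx
    apply habs0
    intro ε hε
    obtain ⟨T, hT0, hT⟩ := htail_bot ε hε
    have claim : ∀ n : ℕ, ∀ y, y ≤ T * β ^ n → |D y| ≤ ε := by
      intro n
      induction n with
      | zero => intro y hy; exact hT y (by simpa using hy)
      | succ n ih =>
        intro y hy
        have h1 : y / β ≤ T * β ^ n := by
          rw [div_le_iff₀ hβ0]
          calc y ≤ T * β ^ (n+1) := hy
            _ = T * β ^ n * β := by ring
        have h2 : y / β + 1 - 1 / β ≤ T * β ^ n := by linarith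
        have a1 := ih _ h1
        have a2 := ih _ h2
        calc |D y| = |p * D (y / β) + q * D (y / β + 1 - 1 / β)| := by rw [hD y]
          _ ≤ p * |D (y / β)| + q * |D (y / β + 1 - 1 / β)| := habs _ _
          _ ≤ p * ε + q * ε := by nlinarith
          _ = ε := by rw [hq]; ring
    have htend : Filter.Tendsto (fun n : ℕ => T * β ^ n) Filter.atTop (nhds 0) := by
      simpa using hβpow.const_mul T
    obtain ⟨n, hn⟩ := (htend.eventually (eventually_gt_nhds hx)).exists
    exact claim n x hn.le
  have hDle : ∀ x, x ≤ 0 → D x = 0 := by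
    intro x hx
    rcases lt_or_eq_of_le hx with h | h
    · exact hDneg x h
    · subst h
      have h0 := hD 0
      have e1 : (0:ℝ) / β = 0 := by simp
      rw [e1] at h0
      have e2 : D (0 + 1 - 1 / β) = 0 := hDneg _ (by linarith)
      rw [e2] at h0
      have : D 0 * (1 - p) = 0 := by linarith
      rcases mul_eq_zero.mp this with h | h
      · exact h
      · linarith
  -- D vanishes on (1, ∞)
  have hDgt : ∀ x, 1 < x → D x = 0 := by
    intro x hx
    apply habs0
    intro ε hε
    obtain ⟨T, hT1, hT⟩ := htail_top ε hε
    have claim : ∀ n : ℕ, ∀ y, (T - 1) * β ^ n ≤ y - 1 → |D y| ≤ ε := by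
      intro n
      induction n with
      | zero => intro y hy; exact hT y (by simpa using by linarith [hy, (by simp : (β:ℝ)^0 = 1)])
      | succ n ih =>
        intro y hy
        have hydiv : (T - 1) * β ^ n ≤ (y - 1) / β := by
          rw [le_div_iff₀ hβ0]
          calc (T - 1) * β ^ n * β = (T - 1) * β ^ (n+1) := by ring
            _ ≤ y - 1 := hy
        have hyβ : (y - 1) / β = y / β - 1 / β := by ring
        have h1 : (T - 1) * β ^ n ≤ y / β - 1 := by
          have : (1:ℝ) ≤ 1 / β := by linarith
          rw [hyβ] at hydiv
          linarith
        have h2 : (T - 1) * β ^ n ≤ (y / β + 1 - 1 / β) - 1 := by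
          rw [hyβ] at hydiv
          linarith
        have a1 := ih _ (by linarith : (T - 1) * β ^ n ≤ (y / β) - 1)
        have a2 := ih _ h2
        calc |D y| = |p * D (y / β) + q * D (y / β + 1 - 1 / β)| := by rw [hD y]
          _ ≤ p * |D (y / β)| + q * |D (y / β + 1 - 1 / β)| := habs _ _
          _ ≤ p * ε + q * ε := by nlinarith
          _ = ε := by rw [hq]; ring
    have htend : Filter.Tendsto (fun n : ℕ => (T - 1) * β ^ n) Filter.atTop (nhds 0) := by
      simpa using hβpow.const_mul (T - 1)
    have hx1 : (0:ℝ) < x - 1 := by linarith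
    obtain ⟨n, hn⟩ := (htend.eventually (eventually_lt_nhds hx1)).exists
    exact claim n x hn.le
  have hDge : ∀ x, 1 ≤ x → D x = 0 := by
    intro x hx
    rcases lt_or_eq_of_le hx with h | h
    · exact hDgt x h
    · subst h
      have h0 := hD 1
      have e1 : D ((1:ℝ) / β) = 0 := hDgt _ (by linarith)
      have e2 : (1:ℝ) / β + 1 - 1 / β = 1 := by ring
      rw [e1, e2] at h0
      have : D 1 * (1 - q) = 0 := by linarith
      rcases mul_eq_zero.mp this with h | h
      · exact h
      · linarith
  -- Contraction on the middle
  set k : ℝ := max p q with hk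
  have hk0 : 0 < k := lt_of_lt_of_le hp0 (le_max_left _ _)
  have hk1 : k < 1 := max_lt hp1 hq1
  have main : ∀ n : ℕ, ∀ x, |D x| ≤ k ^ n := by
    intro n
    induction n with
    | zero => intro x; simpa using hDb x
    | succ n ih =>
      intro x
      rcases le_or_gt x (1 - β) with hx | hx
      · have e2 : D (x / β + 1 - 1 / β) = 0 := by
          apply hDle
          have : x / β ≤ (1 - β) / β := by
            gcongr
          have e : (1 - β) / β = 1 / β - 1 := by
            field_simp
          linarith
        have h0 := hD x
        rw [e2] at h0
        calc |D x| = |p * D (x / β)| := by rw [h0]; ring_nf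
          _ = p * |D (x / β)| := by rw [abs_mul, abs_of_pos hp0]
          _ ≤ p * k ^ n := by nlinarith [ih (x / β), abs_nonneg (D (x / β))]
          _ ≤ k * k ^ n := by
              have : p ≤ k := le_max_left _ _
              nlinarith [pow_nonneg hk0.le n]
          _ = k ^ (n + 1) := by ring
      · have hxβ : β ≤ x := by linarith
        have e1 : D (x / β) = 0 := by
          apply hDge
          rw [le_div_iff₀ hβ0]
          linarith
        have h0 := hD x
        rw [e1] at h0
        calc |D x| = |q * D (x / β + 1 - 1 / β)| := by rw [h0]; ring_nf
          _ = q * |D (x / β + 1 - 1 / β)| := by rw [abs_mul, abs_of_pos hq0]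
          _ ≤ q * k ^ n := by nlinarith [ih (x / β + 1 - 1 / β), abs_nonneg (D (x / β + 1 - 1 / β))]
          _ ≤ k * k ^ n := by
              have : q ≤ k := le_max_right _ _
              nlinarith [pow_nonneg hk0.le n]
          _ = k ^ (n + 1) := by ring
  have hkpow : Filter.Tendsto (fun n : ℕ => k ^ n) Filter.atTop (nhds 0) :=
    tendsto_pow_atTop_nhds_zero_of_lt_one hk0.le hk1
  funext x
  have h0 : |D x| ≤ 0 := ge_of_tendsto' hkpow (fun n => main n x)
  have : D x = 0 := abs_eq_zero.mp (le_antisymm h0 (abs_nonneg _))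
  simpa [hDdef, sub_eq_zero] using this
end

section
/- Let F_{β,p} denote the unique distribution function satisfying the functional equation with parameters (β,p). Then 1 - F_{β,p}(1 - x) = F_{β,q}(x) for all real x. -/
/-!
The equation says that `F` is the distribution function of the self-similar measure giving
weight `r` to the map `x ↦ β x` and weight `1 - r` to `x ↦ β x + 1 - β`. The reflection
`F ↦ 1 - F (1 - ·)` exchanges the two maps, so it turns a solution for `p` into one for `q`, and
what remains is uniqueness. A solution vanishes on `(-∞, 0]` and equals `1` on `[1, ∞)`; as
`β ≤ 1/2`, at most one of `x / β` and `x / β + 1 - 1 / β` lies in `(0, 1)`, so the difference `H`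
of two solutions satisfies `sup |H| ≤ max r (1 - r) * sup |H|`.
-/

open Filter Set Topology

structure IsSelfSimilarCDF (β r : ℝ) (F : ℝ → ℝ) : Prop where
  mono : Monotone F
  tendsto_atBot : Tendsto F atBot (𝓝 0)
  tendsto_atTop : Tendsto F atTop (𝓝 1)
  eq : ∀ x, F x = r * F (x / β) + (1 - r) * F (x / β + 1 - 1 / β)

lemma nonpos_of_le_comp_div {F : ℝ → ℝ} {β : ℝ} (hβ0 : 0 < β) (hβ1 : β < 1)
    (hF : ∀ x, F x ≤ F (x / β)) (hbot : Tendsto F atBot (𝓝 0)) {x : ℝ} (hx : x < 0) :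
    F x ≤ 0 := by
  have hiter : ∀ n : ℕ, F x ≤ F (x * β⁻¹ ^ n) := by
    intro n
    induction n with
    | zero => simp
    | succ n ih =>
      rw [pow_succ, ← mul_assoc, ← div_eq_mul_inv]
      exact ih.trans (hF _)
  have hto : Tendsto (fun n : ℕ => x * β⁻¹ ^ n) atTop atBot :=
    (tendsto_pow_atTop_atTop_of_one_lt (one_lt_inv₀ hβ0 |>.mpr hβ1)).const_mul_atTop_of_neg hx
  exact ge_of_tendsto (hbot.comp hto) (Eventually.of_forall hiter)

lemma eq_zero_of_abs_le_mul_abs {α : Type*} {H : α → ℝ} {c : ℝ} (hc0 : 0 ≤ c) (hc1 : c < 1)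
    (hbdd : BddAbove (range fun x => |H x|)) (h : ∀ x, ∃ y, |H x| ≤ c * |H y|) (x : α) :
    H x = 0 := by
  have : Nonempty α := ⟨x⟩
  set D := ⨆ y, |H y|
  have hxD : |H x| ≤ D := le_ciSup hbdd x
  have hD : D ≤ c * D := ciSup_le fun y => by
    obtain ⟨z, hz⟩ := h y
    exact hz.trans (mul_le_mul_of_nonneg_left (le_ciSup hbdd z) hc0)
  have : D ≤ 0 := by nlinarith [abs_nonneg (H x)]
  exact abs_nonpos_iff.mp (hxD.trans this)

lemma one_le_div_or_div_add_one_sub_le_zero {β : ℝ} (hβ0 : 0 < β) (hβ : β ≤ 1 / 2) (x : ℝ) :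
    1 ≤ x / β ∨ x / β + 1 - 1 / β ≤ 0 := by
  rcases le_or_gt β x with hx | hx
  · exact Or.inl ((one_le_div hβ0).mpr hx)
  · right
    have : x / β + 1 - 1 / β = (x - (1 - β)) / β := by field_simp; ring
    rw [this]
    exact div_nonpos_of_nonpos_of_nonneg (by linarith) hβ0.le

namespace IsSelfSimilarCDF

variable {β r : ℝ} {F G : ℝ → ℝ}

lemma nonneg (hF : IsSelfSimilarCDF β r F) (x : ℝ) : 0 ≤ F x :=
  hF.mono.le_of_tendsto hF.tendsto_atBot x

lemma le_one (hF : IsSelfSimilarCDF β r F) (x : ℝ) : F x ≤ 1 :=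
  hF.mono.ge_of_tendsto hF.tendsto_atTop x

lemma reflect (hF : IsSelfSimilarCDF β r F) :
    IsSelfSimilarCDF β (1 - r) (fun x => 1 - F (1 - x)) where
  mono a b hab := by
    simp only
    linarith [hF.mono (show 1 - b ≤ 1 - a by linarith)]
  tendsto_atBot := by
    have h : Tendsto (fun x : ℝ => 1 - x) atBot atTop :=
      tendsto_atBot_atTop.mpr fun b => ⟨1 - b, fun x hx => by linarith⟩
    simpa using (hF.tendsto_atTop.comp h).const_sub 1
  tendsto_atTop := by
    have h : Tendsto (fun x : ℝ => 1 - x) atTop atBot :=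
      tendsto_atTop_atBot.mpr fun b => ⟨1 - b, fun x hx => by linarith⟩
    simpa using (hF.tendsto_atBot.comp h).const_sub 1
  eq x := by
    have h := hF.eq (1 - x)
    rw [show (1 - x) / β = 1 - (x / β + 1 - 1 / β) by ring,
      show 1 - (x / β + 1 - 1 / β) + 1 - 1 / β = 1 - x / β by ring] at h
    linear_combination -h

lemma eq_zero_of_nonpos (hF : IsSelfSimilarCDF β r F) (hβ0 : 0 < β) (hβ1 : β < 1)
    (hr1 : r < 1) {x : ℝ} (hx : x ≤ 0) : F x = 0 := by
  have hneg : ∀ {y : ℝ}, y < 0 → F y = 0 := by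
    intro y hy
    refine le_antisymm (nonpos_of_le_comp_div hβ0 hβ1 (fun z => ?_) hF.tendsto_atBot hy)
      (hF.nonneg y)
    have hle : F (z / β + 1 - 1 / β) ≤ F (z / β) :=
      hF.mono (by linarith [(one_le_div hβ0).mpr hβ1.le])
    nlinarith [hF.eq z]
  rcases hx.lt_or_eq with hx | rfl
  · exact hneg hx
  · have h0 := hF.eq 0
    rw [zero_div, hneg (by linarith [(one_lt_div hβ0).mpr hβ1] : (0 : ℝ) + 1 - 1 / β < 0)] at h0
    nlinarith

lemma eq_one_of_one_le (hF : IsSelfSimilarCDF β r F) (hβ0 : 0 < β) (hβ1 : β < 1)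
    (hr0 : 0 < r) {x : ℝ} (hx : 1 ≤ x) : F x = 1 := by
  have := hF.reflect.eq_zero_of_nonpos hβ0 hβ1 (by linarith) (x := 1 - x) (by linarith)
  simp only [sub_sub_cancel] at this
  linarith

lemma unique (hF : IsSelfSimilarCDF β r F) (hG : IsSelfSimilarCDF β r G)
    (hβ0 : 0 < β) (hβ : β ≤ 1 / 2) (hr0 : 0 < r) (hr1 : r < 1) : F = G := by
  have hβ1 : β < 1 := by linarith
  set H := fun x => F x - G x with hH
  have hzero : ∀ {y}, y ≤ 0 ∨ 1 ≤ y → H y = 0 := by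
    rintro y (hy | hy)
    · simp only [hH, hF.eq_zero_of_nonpos hβ0 hβ1 hr1 hy, hG.eq_zero_of_nonpos hβ0 hβ1 hr1 hy,
        sub_self]
    · simp only [hH, hF.eq_one_of_one_le hβ0 hβ1 hr0 hy, hG.eq_one_of_one_le hβ0 hβ1 hr0 hy,
        sub_self]
  have hcontr : ∀ x, ∃ y, |H x| ≤ max r (1 - r) * |H y| := by
    intro x
    have hHx : H x = r * H (x / β) + (1 - r) * H (x / β + 1 - 1 / β) := by
      simp only [hH]
      rw [hF.eq x, hG.eq x]
      ring
    rcases one_le_div_or_div_add_one_sub_le_zero hβ0 hβ x with h | h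
    · refine ⟨x / β + 1 - 1 / β, ?_⟩
      rw [hHx, hzero (Or.inr h), mul_zero, zero_add, abs_mul, abs_of_pos (by linarith)]
      gcongr
      exact le_max_right _ _
    · refine ⟨x / β, ?_⟩
      rw [hHx, hzero (Or.inl h), mul_zero, add_zero, abs_mul, abs_of_pos hr0]
      gcongr
      exact le_max_left _ _
  have hbdd : BddAbove (range fun x => |H x|) := by
    refine ⟨1, ?_⟩
    rintro _ ⟨y, rfl⟩
    rw [abs_le]
    constructor <;> linarith [hF.nonneg y, hF.le_one y, hG.nonneg y, hG.le_one y]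
  funext x
  exact sub_eq_zero.mp <| eq_zero_of_abs_le_mul_abs (le_max_of_le_left hr0.le)
    (max_lt hr1 (by linarith)) hbdd hcontr x

end IsSelfSimilarCDF

theorem stmt8_general (β p q : ℝ) (hβ0 : 0 < β) (hβ : β ≤ 1/2)
    (hp0 : 0 < p) (hp1 : p < 1) (hq : q = 1 - p)
    (Fp Fq : ℝ → ℝ)
    (hFpmono : Monotone Fp)
    (hFpbot : Filter.Tendsto Fp Filter.atBot (nhds 0))
    (hFptop : Filter.Tendsto Fp Filter.atTop (nhds 1))
    (hFp : ∀ x : ℝ, Fp x = p * Fp (x / β) + q * Fp (x / β + 1 - 1 / β))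
    (hFqmono : Monotone Fq)
    (hFqbot : Filter.Tendsto Fq Filter.atBot (nhds 0))
    (hFqtop : Filter.Tendsto Fq Filter.atTop (nhds 1))
    (hFq : ∀ x : ℝ, Fq x = q * Fq (x / β) + p * Fq (x / β + 1 - 1 / β)) :
    ∀ x : ℝ, 1 - Fp (1 - x) = Fq x := by
  subst hq
  have hFp' : IsSelfSimilarCDF β p Fp := ⟨hFpmono, hFpbot, hFptop, hFp⟩
  have hFq' : IsSelfSimilarCDF β (1 - p) Fq :=
    ⟨hFqmono, hFqbot, hFqtop, fun x => by rw [hFq x, sub_sub_cancel]⟩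
  exact congrFun (hFp'.reflect.unique hFq' hβ0 hβ (by linarith) (by linarith))

theorem stmt8 (β p q : ℝ) (hβ0 : 0 < β) (hβ : β ≤ 1/2)
    (hp0 : 0 < p) (hp1 : p < 1) (hq : q = 1 - p)
    (hne : ¬(β = 1/2 ∧ p = 1/2))
    (Fp Fq : ℝ → ℝ)
    (hFpmono : Monotone Fp)
    (hFprc : ∀ x : ℝ, ContinuousWithinAt Fp (Set.Ici x) x)
    (hFpbot : Filter.Tendsto Fp Filter.atBot (nhds 0))
    (hFptop : Filter.Tendsto Fp Filter.atTop (nhds 1))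
    (hFp : ∀ x : ℝ, Fp x = p * Fp (x / β) + q * Fp (x / β + 1 - 1 / β))
    (hFqmono : Monotone Fq)
    (hFqrc : ∀ x : ℝ, ContinuousWithinAt Fq (Set.Ici x) x)
    (hFqbot : Filter.Tendsto Fq Filter.atBot (nhds 0))
    (hFqtop : Filter.Tendsto Fq Filter.atTop (nhds 1))
    (hFq : ∀ x : ℝ, Fq x = q * Fq (x / β) + p * Fq (x / β + 1 - 1 / β)) :
    ∀ x : ℝ, 1 - Fp (1 - x) = Fq x :=
  stmt8_general β p q hβ0 hβ hp0 hp1 hq Fp Fq hFpmono hFpbot hFptop hFp hFqmono hFqbot hFqtop hFq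
end

section
/- Let F = F_{β,p} be the unique distribution function satisfying the functional equation. For all integers k ≥ 0 and all real x, y with |x - y| ≤ β^k, one has |F(x) - F(y)| ≤ max(p,q)^k. -/
set_option maxHeartbeats 1000000 in
theorem stmt9 (β p q : ℝ) (hβ0 : 0 < β) (hβ : β ≤ 1/2)
    (hp0 : 0 < p) (hp1 : p < 1) (hq : q = 1 - p)
    (hne : ¬(β = 1/2 ∧ p = 1/2))
    (F : ℝ → ℝ) (hmono : Monotone F)
    (hrc : ∀ x : ℝ, ContinuousWithinAt F (Set.Ici x) x)
    (hbot : Filter.Tendsto F Filter.atBot (nhds 0))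
    (htop : Filter.Tendsto F Filter.atTop (nhds 1))
    (hF : ∀ x : ℝ, F x = p * F (x / β) + q * F (x / β + 1 - 1 / β)) :
    ∀ k : ℕ, ∀ x y : ℝ, |x - y| ≤ β ^ k → |F x - F y| ≤ max p q ^ k := by
  have hq0 : 0 < q := by rw [hq]; linarith
  have hq1 : q < 1 := by rw [hq]; linarith
  have hβ1 : β ≤ 1 := by linarith
  have hβinv : (2:ℝ) ≤ 1/β := by
    rw [le_div_iff₀ hβ0]; linarith
  set m := max p q with hm
  have hpm : p ≤ m := le_max_left _ _
  have hqm : q ≤ m := le_max_right _ _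
  have hm0 : 0 < m := lt_of_lt_of_le hp0 hpm
  have hm1 : m ≤ 1 := max_le hp1.le hq1.le
  clear_value m
  -- bounds on F
  have hF0 : ∀ x, 0 ≤ F x := by
    intro x
    refine le_of_tendsto hbot ?_
    exact Filter.eventually_atBot.mpr ⟨x, fun y hy => hmono hy⟩
  have hF1 : ∀ x, F x ≤ 1 := by
    intro x
    refine ge_of_tendsto htop ?_
    exact Filter.eventually_atTop.mpr ⟨x, fun y hy => hmono hy⟩
  -- F = 0 on (-∞, 0]
  have hFneg : ∀ x : ℝ, x ≤ 0 → F x = 0 := by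
    have hstep : ∀ x : ℝ, x ≤ 0 → F x = F (x / β) := by
      intro x hx
      have h1 : x / β ≤ x := by
        rw [div_le_iff₀ hβ0]
        nlinarith
      have h2 : x / β + 1 - 1 / β ≤ x / β := by
        have : (1:ℝ) ≤ 1/β := by linarith
        linarith
      refine le_antisymm ?_ (hmono h1)
      calc F x = p * F (x / β) + q * F (x / β + 1 - 1 / β) := hF x
        _ ≤ p * F (x / β) + q * F (x / β) := by
            have := hmono h2; nlinarith
        _ = F (x / β) := by rw [hq]; ring
    have hneg : ∀ x : ℝ, x < 0 → F x = 0 := by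
      intro x hx
      have hiter : ∀ n : ℕ, F x = F (x * (β⁻¹) ^ n) := by
        intro n
        induction n with
        | zero => simp
        | succ n ih =>
          have hxn : x * (β⁻¹) ^ n ≤ 0 := by
            apply mul_nonpos_of_nonpos_of_nonneg hx.le
            positivity
          rw [ih, hstep _ hxn]
          congr 1
          rw [pow_succ, div_eq_mul_inv]
          ring
      have htend : Filter.Tendsto (fun n : ℕ => x * (β⁻¹) ^ n) Filter.atTop Filter.atBot := by
        rw [Filter.tendsto_const_mul_atBot_of_neg hx]
        apply tendsto_pow_atTop_atTop_of_one_lt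
        rw [one_lt_inv₀ hβ0]; linarith
      have h2 : Filter.Tendsto (fun n : ℕ => F (x * (β⁻¹) ^ n)) Filter.atTop (nhds 0) :=
        hbot.comp htend
      have hconst : Filter.Tendsto (fun _ : ℕ => F x) Filter.atTop (nhds 0) :=
        h2.congr fun n => (hiter n).symm
      exact tendsto_nhds_unique tendsto_const_nhds hconst
    intro x hx
    rcases lt_or_eq_of_le hx with h | h
    · exact hneg x h
    · subst h
      have h0 : F ((0:ℝ) / β + 1 - 1 / β) = 0 := by
        apply hneg; rw [zero_div]; linarith
      have := hF 0
      rw [h0, zero_div] at this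
      nlinarith
  -- F = 1 on [1, ∞)
  have hFone : ∀ x : ℝ, 1 ≤ x → F x = 1 := by
    have hstep : ∀ x : ℝ, 1 ≤ x → F x = F ((x - 1) / β + 1) := by
      intro x hx
      have h1 : x ≤ (x - 1) / β + 1 := by
        rw [← sub_le_iff_le_add, le_div_iff₀ hβ0]
        nlinarith
      have h2' : x / β + 1 - 1 / β = (x - 1)/β + 1 := by ring
      have h2 : (x - 1) / β + 1 ≤ x / β := by
        rw [← h2']
        have : (1:ℝ) ≤ 1/β := by linarith
        linarith
      refine le_antisymm (hmono h1) ?_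
      calc F x = p * F (x / β) + q * F (x / β + 1 - 1 / β) := hF x
        _ ≥ p * F ((x-1)/β + 1) + q * F ((x-1)/β+1) := by
            rw [h2']
            have := hmono h2
            nlinarith
        _ = F ((x-1)/β + 1) := by rw [hq]; ring
    have hpos : ∀ x : ℝ, 1 < x → F x = 1 := by
      intro x hx
      have hiter : ∀ n : ℕ, F x = F ((x - 1) * (β⁻¹) ^ n + 1) := by
        intro n
        induction n with
        | zero => simp
        | succ n ih =>
          have hxn : 1 ≤ (x - 1) * (β⁻¹) ^ n + 1 := by
            have : 0 ≤ (x - 1) * (β⁻¹) ^ n :=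
              mul_nonneg (by linarith) (by positivity)
            linarith
          rw [ih, hstep _ hxn]
          congr 1
          rw [pow_succ, div_eq_mul_inv]
          ring
      have htend : Filter.Tendsto (fun n : ℕ => (x - 1) * (β⁻¹) ^ n + 1)
          Filter.atTop Filter.atTop := by
        apply Filter.tendsto_atTop_add_const_right
        apply Filter.Tendsto.const_mul_atTop (by linarith)
        apply tendsto_pow_atTop_atTop_of_one_lt
        rw [one_lt_inv₀ hβ0]; linarith
      have h2 : Filter.Tendsto (fun n : ℕ => F ((x - 1) * (β⁻¹) ^ n + 1))
          Filter.atTop (nhds 1) := htop.comp htend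
      have hconst : Filter.Tendsto (fun _ : ℕ => F x) Filter.atTop (nhds 1) :=
        h2.congr fun n => (hiter n).symm
      exact tendsto_nhds_unique tendsto_const_nhds hconst
    intro x hx
    rcases lt_or_eq_of_le hx with h | h
    · exact hpos x h
    · subst h
      have h0 : F ((1:ℝ) / β) = 1 := by apply hpos; linarith
      have heq := hF 1
      rw [h0] at heq
      have h1e : (1:ℝ) / β + 1 - 1 / β = 1 := by ring
      rw [h1e] at heq
      -- heq : F 1 = p * 1 + q * F 1
      have hF11 := hF1 1
      rw [hq] at heq
      nlinarith [hp0]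
  -- the straddle lemma
  have hH : ∀ k : ℕ, ∀ a b : ℝ, a ≤ 1 → 0 ≤ b → (1 - a) + b ≤ β ^ k →
      (1 - F a) + F b ≤ m ^ k := by
    intro k
    induction k with
    | zero =>
      intro a b ha hb hab
      simp only [pow_zero] at hab ⊢
      have hba : b ≤ a := by linarith
      have := hmono hba
      linarith
    | succ k ih =>
      intro a b ha hb hab
      have hβk : β ^ (k+1) ≤ β := by
        have hk1 : β ^ k ≤ 1 := pow_le_one₀ hβ0.le hβ1
        calc β ^ (k+1) = β ^ k * β := pow_succ β k
          _ ≤ 1 * β := by nlinarith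
          _ = β := one_mul β
      have ha1 : 1 - β ≤ a := by linarith
      have hbβ : b ≤ β := by linarith
      have haβ : (1:ℝ) ≤ a / β := by
        rw [le_div_iff₀ hβ0]; nlinarith
      have hFa : F a = p + q * F (a / β + 1 - 1 / β) := by
        rw [hF a, hFone _ haβ, mul_one]
      have hbneg : b / β + 1 - 1 / β ≤ 0 := by
        have : b / β ≤ 1 := by rw [div_le_one hβ0]; linarith
        linarith
      have hFb : F b = p * F (b / β) := by
        rw [hF b, hFneg _ hbneg, mul_zero, add_zero]
      have ha'1 : a / β + 1 - 1 / β ≤ 1 := by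
        have : a / β ≤ 1 / β := by gcongr
        linarith
      have hb'0 : 0 ≤ b / β := by positivity
      have hsum : (1 - (a / β + 1 - 1 / β)) + b / β ≤ β ^ k := by
        have h1 : (1 - (a / β + 1 - 1 / β)) + b / β = ((1 - a) + b) / β := by
          field_simp; ring
        rw [h1, div_le_iff₀ hβ0]
        calc (1 - a) + b ≤ β ^ (k+1) := hab
          _ = β ^ k * β := by ring
      have hIH := ih _ _ ha'1 hb'0 hsum
      have h1 : 1 - F a = q * (1 - F (a / β + 1 - 1 / β)) := by
        rw [hFa, hq]; ring
      have hFa' := hF1 (a / β + 1 - 1 / β)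
      have hFb' := hF0 (b / β)
      calc (1 - F a) + F b
          = q * (1 - F (a / β + 1 - 1 / β)) + p * F (b / β) := by rw [h1, hFb]
        _ ≤ m * (1 - F (a / β + 1 - 1 / β)) + m * F (b / β) :=
            add_le_add (mul_le_mul_of_nonneg_right hqm (by linarith))
              (mul_le_mul_of_nonneg_right hpm (by linarith))
        _ = m * ((1 - F (a / β + 1 - 1 / β)) + F (b / β)) := by ring
        _ ≤ m * m ^ k := mul_le_mul_of_nonneg_left hIH hm0.le
        _ = m ^ (k+1) := by ring
  -- main induction
  intro k
  induction k with
  | zero =>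
    intro x y _
    simp only [pow_zero]
    have := hF0 x; have := hF1 x; have := hF0 y; have := hF1 y
    rw [abs_le]; constructor <;> linarith
  | succ k ih =>
    have key : ∀ x y : ℝ, y ≤ x → x - y ≤ β ^ (k+1) → F x - F y ≤ m ^ (k+1) := by
      intro x y hyx hxy
      have hdiv : (x - y) / β ≤ β ^ k := by
        rw [div_le_iff₀ hβ0]
        calc x - y ≤ β ^ (k+1) := hxy
          _ = β ^ k * β := by ring
      rcases le_or_gt x β with hxβ | hxβ
      · -- both F-at-second-arg vanish
        have h2x : x / β + 1 - 1 / β ≤ 0 := by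
          have : x / β ≤ 1 := by rw [div_le_one hβ0]; linarith
          linarith
        have h2y : y / β + 1 - 1 / β ≤ 0 := by
          have : y / β ≤ 1 := by rw [div_le_one hβ0]; linarith [hyx.trans hxβ]
          linarith
        have hx' : F x = p * F (x / β) := by
          rw [hF x, hFneg _ h2x, mul_zero, add_zero]
        have hy' : F y = p * F (y / β) := by
          rw [hF y, hFneg _ h2y, mul_zero, add_zero]
        have habs : |x / β - y / β| ≤ β ^ k := by
          have heq : x / β - y / β = (x - y) / β := by ring
          rw [heq, abs_of_nonneg (div_nonneg (by linarith) hβ0.le)]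
          exact hdiv
        have hIH := ih (x / β) (y / β) habs
        have hge : 0 ≤ F (x / β) - F (y / β) := by
          have h' : y / β ≤ x / β := by gcongr
          have := hmono h'
          linarith
        rw [abs_of_nonneg hge] at hIH
        calc F x - F y = p * (F (x / β) - F (y / β)) := by rw [hx', hy']; ring
          _ ≤ m * (F (x / β) - F (y / β)) := mul_le_mul_of_nonneg_right hpm hge
          _ ≤ m * m ^ k := mul_le_mul_of_nonneg_left hIH hm0.le
          _ = m ^ (k+1) := by ring
      · rcases le_or_gt β y with hyβ | hyβ
        · -- both first args ≥ 1
          have h1x : (1:ℝ) ≤ x / β := by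
            rw [le_div_iff₀ hβ0]; nlinarith [hyβ.trans hyx]
          have h1y : (1:ℝ) ≤ y / β := by
            rw [le_div_iff₀ hβ0]; nlinarith
          have hx' : F x = p + q * F (x / β + 1 - 1 / β) := by
            rw [hF x, hFone _ h1x, mul_one]
          have hy' : F y = p + q * F (y / β + 1 - 1 / β) := by
            rw [hF y, hFone _ h1y, mul_one]
          have habs : |(x / β + 1 - 1 / β) - (y / β + 1 - 1 / β)| ≤ β ^ k := by
            have heq : (x / β + 1 - 1 / β) - (y / β + 1 - 1 / β) = (x - y) / β := by ring
            rw [heq, abs_of_nonneg (div_nonneg (by linarith) hβ0.le)]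
            exact hdiv
          have hIH := ih _ _ habs
          have hge : 0 ≤ F (x / β + 1 - 1 / β) - F (y / β + 1 - 1 / β) := by
            have haux : y / β + 1 - 1 / β ≤ x / β + 1 - 1 / β := by
              have : y / β ≤ x / β := by gcongr
              linarith
            have := hmono haux
            linarith
          rw [abs_of_nonneg hge] at hIH
          calc F x - F y = q * (F (x / β + 1 - 1 / β) - F (y / β + 1 - 1 / β)) := by
                rw [hx', hy']; ring
            _ ≤ m * (F (x / β + 1 - 1 / β) - F (y / β + 1 - 1 / β)) :=
                mul_le_mul_of_nonneg_right hqm hge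
            _ ≤ m * m ^ k := mul_le_mul_of_nonneg_left hIH hm0.le
            _ = m ^ (k+1) := by ring
        · -- straddle: y < β < x
          have h1x : (1:ℝ) ≤ x / β := by rw [le_div_iff₀ hβ0]; nlinarith
          have h2y : y / β + 1 - 1 / β ≤ 0 := by
            have : y / β ≤ 1 := by rw [div_le_one hβ0]; linarith
            linarith
          have hx' : F x = p + q * F (x / β + 1 - 1 / β) := by
            rw [hF x, hFone _ h1x, mul_one]
          have hy' : F y = p * F (y / β) := by
            rw [hF y, hFneg _ h2y, mul_zero, add_zero]
          set a := y / β with hadef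
          set b := x / β + 1 - 1 / β with hbdef
          set b' := max b 0 with hb'def
          have ha1 : a ≤ 1 := by
            rw [hadef, div_le_one hβ0]; linarith
          have hb'0 : 0 ≤ b' := le_max_right _ _
          have hsum : (1 - a) + b' ≤ β ^ k := by
            rcases le_total b 0 with hb | hb
            · have : b' = 0 := max_eq_right hb
              rw [this, add_zero]
              have : 1 - a = (β - y) / β := by
                rw [hadef]; field_simp
              rw [this]
              calc (β - y) / β ≤ (x - y) / β := by gcongr <;> linarith
                _ ≤ β ^ k := hdiv
            · have : b' = b := max_eq_left hb
              rw [this, hbdef, hadef]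
              have heq : (1 - y / β) + (x / β + 1 - 1 / β) = (x - y) / β + (2 * β - 1) / β := by
                field_simp; ring
              rw [heq]
              have h2β : (2 * β - 1) / β ≤ 0 := by
                apply div_nonpos_of_nonpos_of_nonneg <;> linarith
              linarith
          have hHk := hH k a b' ha1 hb'0 hsum
          have hFbb' : F b ≤ F b' := hmono (le_max_left _ _)
          have hFa1 := hF1 a
          have hFb0 := hF0 b
          have hFb'0 := hF0 b'
          calc F x - F y = p * (1 - F a) + q * F b := by rw [hx', hy']; ring
            _ ≤ p * (1 - F a) + q * F b' :=
                add_le_add le_rfl (mul_le_mul_of_nonneg_left hFbb' hq0.le)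
            _ ≤ m * (1 - F a) + m * F b' :=
                add_le_add (mul_le_mul_of_nonneg_right hpm (by linarith))
                  (mul_le_mul_of_nonneg_right hqm hFb'0)
            _ = m * ((1 - F a) + F b') := by ring
            _ ≤ m * m ^ k := mul_le_mul_of_nonneg_left hHk hm0.le
            _ = m ^ (k+1) := by ring
    intro x y hxy
    rcases le_total y x with h | h
    · have h1 : x - y ≤ β ^ (k+1) := by
        rw [abs_of_nonneg (by linarith)] at hxy; exact hxy
      have h2 := key x y h h1
      have := hmono h
      rw [abs_of_nonneg (by linarith)]
      exact h2
    · have h1 : y - x ≤ β ^ (k+1) := by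
        rw [abs_of_nonpos (by linarith), neg_sub] at hxy; exact hxy
      have h2 := key y x h h1
      have := hmono h
      rw [abs_of_nonpos (by linarith), neg_sub]
      exact h2
end

section
/- With a_n = β^{-n}, b_n = 1, k_n = ⌊q^{-n}⌋, for every x < 0: lim_{n→∞} F_{β,p}(x/a_n + b_n)^{k_n} = exp(−(−x)^{log q / log β} · ν_{β,q}(log(−x))), where ν_{β,q} is the periodic function satisfying F_{β,q}(y) = y^{log q/log β}·ν_{β,q}(log y) for 0 < y ≤ 1. -/
/-!
On the left tail, the symmetry `1 - F_{β,p}(1 - y) = F_{β,q}(y)` and the representation of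
`F_{β,q}` give, for `y = -x β^n ≤ 1`,
`F_{β,p}(x β^n + 1) = 1 - (-x)^s ν(log(-x)) q^n` with `s = log q / log β`,
because `β^s = q` and `ν` is `|log β|`-periodic. Since `⌊q^{-n}⌋ q^n → 1`, the `k_n`-th powers
converge to `exp (-(-x)^s ν(log(-x)))` by the classical `(1 + t/k)^k → exp t`.
-/

open Filter Real Topology

theorem tendsto_one_add_pow_exp_of_tendsto_mul {α : Type*} {l : Filter α} {k : α → ℕ}
    {u : α → ℝ} {t : ℝ} (hk : Tendsto k l atTop) (hu : Tendsto (fun a ↦ k a * u a) l (𝓝 t)) :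
    Tendsto (fun a ↦ (1 + u a) ^ k a) l (𝓝 (exp t)) := by
  have hk' : Tendsto (fun a ↦ (k a : ℝ)) l atTop := tendsto_natCast_atTop_atTop.comp hk
  have hu0 : Tendsto u l (𝓝 0) := by
    refine (hu.div_atTop hk').congr' ?_
    filter_upwards [hk'.eventually_gt_atTop 0] with a ha
    exact mul_div_cancel_left₀ _ ha.ne'
  have hslope : Tendsto (fun a ↦ dslope log 1 (1 + u a)) l (𝓝 1) := by
    have hcont := (continuousAt_dslope_same.2 (differentiableAt_log one_ne_zero)).tendsto
    have h1 : Tendsto (fun a ↦ 1 + u a) l (𝓝 1) := by simpa using hu0.const_add 1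
    simpa [dslope_same, deriv_log, Function.comp_def] using hcont.comp h1
  -- `log (1 + u) = u * dslope log 1 (1 + u)`, and the slope tends to `log' 1 = 1`
  have hlog : Tendsto (fun a ↦ k a * log (1 + u a)) l (𝓝 t) := by
    refine (by simpa using hu.mul hslope : Tendsto _ l (𝓝 t)).congr fun a ↦ ?_
    have h := sub_smul_dslope log 1 (1 + u a)
    simp only [add_sub_cancel_left, smul_eq_mul, log_one, sub_zero] at h
    rw [mul_assoc, h]
  refine ((continuous_exp.tendsto t).comp hlog).congr' ?_
  filter_upwards [hu0.eventually (lt_mem_nhds (show (-1 : ℝ) < 0 by norm_num))] with a ha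
  rw [Function.comp_apply, exp_nat_mul, exp_log (by linarith)]

theorem tendsto_one_sub_mul_pow_pow_floor {q : ℝ} (hq0 : 0 < q) (hq1 : q < 1) (c : ℝ) :
    Tendsto (fun n : ℕ ↦ (1 - c * q ^ n) ^ ⌊(1 / q) ^ n⌋₊) atTop (𝓝 (exp (-c))) := by
  have hinv : Tendsto (fun n : ℕ ↦ (1 / q) ^ n) atTop atTop :=
    tendsto_pow_atTop_atTop_of_one_lt (by rw [lt_div_iff₀ hq0]; linarith)
  have hfloor : Tendsto (fun n : ℕ ↦ (⌊(1 / q) ^ n⌋₊ : ℝ) * q ^ n) atTop (𝓝 1) := by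
    refine (tendsto_nat_floor_div_atTop.comp hinv).congr fun n ↦ ?_
    simp [div_eq_mul_inv]
  simp_rw [sub_eq_add_neg]
  refine tendsto_one_add_pow_exp_of_tendsto_mul (tendsto_nat_floor_atTop.comp hinv) ?_
  have h := hfloor.const_mul (-c)
  rw [mul_one] at h
  exact h.congr fun n ↦ by ring

theorem rpow_logb_mul_pow {b a y : ℝ} (hb : 0 < b) (hb1 : b ≠ 1) (ha : 0 < a) (hy : 0 ≤ y)
    (n : ℕ) : (y * b ^ n) ^ logb b a = y ^ logb b a * a ^ n := by
  rw [mul_rpow hy (by positivity), ← rpow_natCast, ← rpow_mul hb.le, mul_comm (n : ℝ),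
    rpow_mul hb.le, rpow_logb hb hb1 ha, rpow_natCast]

theorem Function.Periodic.log_mul_pow {ν : ℝ → ℝ} {b y : ℝ} (hν : Function.Periodic ν (log b))
    (hb : 0 < b) (hy : 0 < y) (n : ℕ) : ν (log (y * b ^ n)) = ν (log y) := by
  rw [log_mul hy.ne' (pow_pos hb n).ne', log_pow]
  exact hν.nat_mul n (log y)

theorem stmt11_general (β p q : ℝ) (hβ0 : 0 < β) (hβ : β ≤ 1/2)
    (hp0 : 0 < p) (hp1 : p < 1) (hq : q = 1 - p)
    (Fp Fq : ℝ → ℝ)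
    (hsym : ∀ y : ℝ, 1 - Fp (1 - y) = Fq y)
    (ν : ℝ → ℝ)
    (hνper : ∀ t : ℝ, ν (t + |Real.log β|) = ν t)
    (hrep : ∀ y : ℝ, 0 < y → y ≤ 1 →
      Fq y = y ^ (Real.log q / Real.log β) * ν (Real.log y)) :
    ∀ x : ℝ, x < 0 →
      Filter.Tendsto
        (fun n : ℕ => Fp (x / β ^ (-(n : ℤ)) + 1) ^ ⌊((1 : ℝ) / q) ^ n⌋₊)
        Filter.atTop
        (nhds (Real.exp (-((-x) ^ (Real.log q / Real.log β) * ν (Real.log (-x)))))) := by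
  intro x hx
  have hq0 : 0 < q := by linarith
  have hβ1 : β < 1 := by linarith
  have hνβ : Function.Periodic ν (log β) := by
    simpa [abs_of_neg (log_neg hβ0 hβ1)] using (show Function.Periodic ν |log β| from hνper).neg
  have hsmall : ∀ᶠ n : ℕ in atTop, -x * β ^ n ≤ 1 := by
    have h := (tendsto_pow_atTop_nhds_zero_of_lt_one hβ0.le hβ1).const_mul (-x)
    rw [mul_zero] at h
    exact (h.eventually_lt_const one_pos).mono fun n hn ↦ hn.le
  refine (tendsto_one_sub_mul_pow_pow_floor hq0 (by linarith) _).congr' ?_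
  filter_upwards [hsmall] with n hn
  have harg : x / β ^ (-(n : ℤ)) + 1 = 1 - -x * β ^ n := by
    rw [zpow_neg, zpow_natCast, div_inv_eq_mul]; ring
  have hF : Fp (1 - -x * β ^ n) = 1 - Fq (-x * β ^ n) := by linarith [hsym (-x * β ^ n)]
  rw [harg, hF, hrep _ (mul_pos (neg_pos.2 hx) (pow_pos hβ0 n)) hn, log_div_log,
    rpow_logb_mul_pow hβ0 hβ1.ne hq0 (by linarith), hνβ.log_mul_pow hβ0 (by linarith)]
  ring

theorem stmt11 (β p q : ℝ) (hβ0 : 0 < β) (hβ : β ≤ 1/2)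
    (hp0 : 0 < p) (hp1 : p < 1) (hq : q = 1 - p)
    (hne : ¬(β = 1/2 ∧ p = 1/2))
    (Fp Fq : ℝ → ℝ)
    (hFp : ∀ x : ℝ, Fp x = p * Fp (x / β) + q * Fp (x / β + 1 - 1 / β))
    (hFq : ∀ x : ℝ, Fq x = q * Fq (x / β) + p * Fq (x / β + 1 - 1 / β))
    (hsym : ∀ y : ℝ, 1 - Fp (1 - y) = Fq y)
    (ν : ℝ → ℝ) (hνpos : ∀ t : ℝ, 0 < ν t) (hνbdd : ∃ M : ℝ, ∀ t : ℝ, ν t ≤ M)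
    (hνper : ∀ t : ℝ, ν (t + |Real.log β|) = ν t)
    (hrep : ∀ y : ℝ, 0 < y → y ≤ 1 →
      Fq y = y ^ (Real.log q / Real.log β) * ν (Real.log y)) :
    ∀ x : ℝ, x < 0 →
      Filter.Tendsto
        (fun n : ℕ => Fp (x / β ^ (-(n : ℤ)) + 1) ^ ⌊((1 : ℝ) / q) ^ n⌋₊)
        Filter.atTop
        (nhds (Real.exp (-((-x) ^ (Real.log q / Real.log β) * ν (Real.log (-x)))))) :=
  stmt11_general β p q hβ0 hβ hp0 hp1 hq Fp Fq hsym ν hνper hrep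
end

section
/- With notation as in the clustering recursion, for all 2 ≤ s ≤ j_n + 1: P(M_s ≤ u_n) = Σ_{i=0}^{s−2} p·q^i·F_{β,p}(u_{n−i}) + q^{s−1}·F_{β,p}(u_{n−(s−1)}), and substituting F_{β,p}(u_{n−i}) = 1 − q^{n−i}·ψ(x) yields P(M_s ≤ u_n) = 1 − (p(s−1)+1)·q^n·ψ(x). -/
/-!
Write `a t i` for the probability that `X_0, …, X_t ≤ u_n` and `X_t ≤ u_{n-i}`. For `t = 0` this is
the marginal `1 - q^(n-i) ψ`, because `u` is increasing in its index; the one-step recursion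
`a (t+1) i = p a t 0 + q a t (i+1)` is then solved by `a t i = 1 - (p t q^n + q^(n-i)) ψ`, and
`i = 0` gives `P(M_{t+1} ≤ u_n)`. The sum in the first identity telescopes to the same value
because `q^i q^(n-i) = q^n` and `p (1 + q + ⋯ + q^(k-1)) = 1 - q^k`.
-/

open MeasureTheory

lemma one_add_zpow_mul_le_of_le {β x : ℝ} (hβ0 : 0 < β) (hβ1 : β ≤ 1) (hx : x ≤ 0)
    {k m : ℤ} (hkm : k ≤ m) : 1 + β ^ k * x ≤ 1 + β ^ m * x := by
  have : β ^ m ≤ β ^ k := zpow_le_zpow_right_of_le_one₀ hβ0 hβ1 hkm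
  nlinarith

section ClosedForm

variable {p q ψ : ℝ}

lemma mul_zpow_sub_succ (hq : q ≠ 0) (m : ℤ) (i : ℕ) :
    q * q ^ (m - (i + 1 : ℕ)) = q ^ (m - i) := by
  rw [mul_comm, ← zpow_add_one₀ hq]
  push_cast
  ring_nf

/-- `a t i := 1 - (p t q^m + q^(m-i)) ψ` solves `a (t+1) i = p a t 0 + q a t (i+1)`. -/
lemma closedForm_step (hpq : p + q = 1) (hq : q ≠ 0) (m : ℤ) (t : ℝ) (i : ℕ) :
    p * (1 - (p * t * q ^ m + q ^ m) * ψ) +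
        q * (1 - (p * t * q ^ m + q ^ (m - (i + 1 : ℕ))) * ψ) =
      1 - (p * (t + 1) * q ^ m + q ^ (m - i)) * ψ := by
  have h := mul_zpow_sub_succ hq m i
  linear_combination (1 - ψ * p * t * q ^ m) * hpq - ψ * h

lemma sum_geom_mul_one_sub_zpow (hpq : p + q = 1) (hq : q ≠ 0) (m : ℤ) (k : ℕ) :
    (∑ i ∈ Finset.range k, p * q ^ i * (1 - q ^ (m - i) * ψ)) +
        q ^ k * (1 - q ^ (m - k) * ψ) =
      1 - (p * k + 1) * q ^ m * ψ := by
  have hpow : ∀ i : ℕ, q ^ i * q ^ (m - i) = q ^ m := fun i => by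
    rw [← zpow_natCast, ← zpow_add₀ hq, add_sub_cancel]
  induction k with
  | zero => simp
  | succ k ih =>
    rw [Finset.sum_range_succ]
    have hk := hpow k
    have hk1 := hpow (k + 1)
    push_cast at *
    rw [pow_succ] at hk1
    linear_combination ih + q ^ k * hpq - p * ψ * hk + ψ * hk - ψ * hk1

end ClosedForm

section JointLaw

variable {Ω : Type*} (X : ℕ → Ω → ℝ)

lemma setOf_forall_lt_succ_le_eq (a : ℝ) (t : ℕ) :
    {ω | ∀ k < t + 1, X k ω ≤ a} = {ω | (∀ k < t + 1, X k ω ≤ a) ∧ X t ω ≤ a} := by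
  ext ω
  simpa using fun h => h t (by omega)

variable [MeasurableSpace Ω] (P : Measure Ω)

theorem toReal_measure_max_le_and_le_eq {p q ψ : ℝ} (hpq : p + q = 1) (hq : q ≠ 0) (m : ℤ)
    (c : ℕ → ℝ) (hc : ∀ i, c i ≤ c 0) (J : ℕ)
    (hmarg : ∀ i ≤ J, (P {ω | X 0 ω ≤ c i}).toReal = 1 - q ^ (m - i) * ψ)
    (hrec : ∀ t i, i + 1 ≤ J →
      (P {ω | (∀ k < t + 2, X k ω ≤ c 0) ∧ X (t + 1) ω ≤ c i}).toReal =
        p * (P {ω | ∀ k < t + 1, X k ω ≤ c 0}).toReal +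
          q * (P {ω | (∀ k < t + 1, X k ω ≤ c 0) ∧ X t ω ≤ c (i + 1)}).toReal)
    (t i : ℕ) (hti : t + i ≤ J) :
    (P {ω | (∀ k < t + 1, X k ω ≤ c 0) ∧ X t ω ≤ c i}).toReal =
      1 - (p * t * q ^ m + q ^ (m - i)) * ψ := by
  induction t generalizing i with
  | zero =>
    have hset : {ω | (∀ k < 0 + 1, X k ω ≤ c 0) ∧ X 0 ω ≤ c i} = {ω | X 0 ω ≤ c i} := by
      ext ω
      simpa using fun h => h.trans (hc i)
    rw [hset, hmarg i (by omega)]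
    simp
  | succ t ih =>
    rw [hrec t i (by omega), setOf_forall_lt_succ_le_eq, ih 0 (by omega),
      ih (i + 1) (by omega)]
    simpa using closedForm_step hpq hq m t i

theorem toReal_measure_max_le_eq {p q ψ : ℝ} (hpq : p + q = 1) (hq : q ≠ 0) (m : ℤ)
    (c : ℕ → ℝ) (hc : ∀ i, c i ≤ c 0) (J : ℕ)
    (hmarg : ∀ i ≤ J, (P {ω | X 0 ω ≤ c i}).toReal = 1 - q ^ (m - i) * ψ)
    (hrec : ∀ t i, i + 1 ≤ J →
      (P {ω | (∀ k < t + 2, X k ω ≤ c 0) ∧ X (t + 1) ω ≤ c i}).toReal =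
        p * (P {ω | ∀ k < t + 1, X k ω ≤ c 0}).toReal +
          q * (P {ω | (∀ k < t + 1, X k ω ≤ c 0) ∧ X t ω ≤ c (i + 1)}).toReal)
    (t : ℕ) (ht : t ≤ J) :
    (P {ω | ∀ k < t + 1, X k ω ≤ c 0}).toReal = 1 - (p * t + 1) * q ^ m * ψ := by
  rw [setOf_forall_lt_succ_le_eq,
    toReal_measure_max_le_and_le_eq X P hpq hq m c hc J hmarg hrec t 0 (by omega)]
  simp only [Nat.cast_zero, sub_zero]
  ring

end JointLaw

theorem stmt14_general {Ω : Type*} [MeasurableSpace Ω] (P : Measure Ω)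
    (β p q : ℝ) (hβ0 : 0 < β) (hβ : β ≤ 1/2)
    (hp1 : p < 1) (hq : q = 1 - p)
    (X : ℕ → Ω → ℝ)
    (x : ℝ) (hx : x < 0) (n : ℕ)
    (u : ℤ → ℝ) (hu : ∀ m : ℤ, u m = 1 + β ^ m * x)
    (ψ : ℝ)
    (jn : ℕ)
    (hmarg : ∀ k : ℕ, ∀ i : ℕ, (i : ℤ) ≤ jn →
      (P {ω | X k ω ≤ u ((n : ℤ) - i)}).toReal = 1 - q ^ ((n : ℤ) - i) * ψ)
    (hrec : ∀ s i : ℕ, 2 ≤ s → (i : ℤ) + 1 ≤ jn →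
      (P {ω | (∀ k < s, X k ω ≤ u n) ∧ X (s-1) ω ≤ u ((n : ℤ) - i)}).toReal =
        p * (P {ω | ∀ k < s - 1, X k ω ≤ u n}).toReal +
          q * (P {ω | (∀ k < s - 1, X k ω ≤ u n) ∧
                X (s-1-1) ω ≤ u ((n : ℤ) - (i + 1))}).toReal) :
    ∀ s : ℕ, 2 ≤ s → s ≤ jn + 1 →
      (P {ω | ∀ k < s, X k ω ≤ u n}).toReal =
        (∑ i ∈ Finset.range (s - 1),
          p * q ^ i * (1 - q ^ ((n : ℤ) - i) * ψ)) +
          q ^ (s - 1) * (1 - q ^ ((n : ℤ) - (s - 1 : ℕ)) * ψ) ∧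
      (P {ω | ∀ k < s, X k ω ≤ u n}).toReal =
        1 - (p * ((s : ℝ) - 1) + 1) * q ^ n * ψ := by
  intro s hs2 hsj
  obtain ⟨t, rfl⟩ : ∃ t, s = t + 1 := ⟨s - 1, by omega⟩
  have hpq : p + q = 1 := by rw [hq]; ring
  have hq0 : q ≠ 0 := by rw [hq]; exact (sub_pos.2 hp1).ne'
  have hc : ∀ i : ℕ, u ((n : ℤ) - i) ≤ u ((n : ℤ) - (0 : ℕ)) := fun i => by
    rw [hu, hu]
    exact one_add_zpow_mul_le_of_le hβ0 (by linarith) hx.le (by omega)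
  have hclosed := toReal_measure_max_le_eq X P hpq hq0 n (fun i => u ((n : ℤ) - i)) hc jn
    (fun i hi => hmarg 0 i (by exact_mod_cast hi))
    (fun t i hi => by
      have h := hrec (t + 2) i (by omega) (by exact_mod_cast hi)
      push_cast at h ⊢
      exact h) t (by omega)
  simp only [Nat.cast_zero, sub_zero, zpow_natCast] at hclosed
  simp only [Nat.add_sub_cancel, Nat.cast_add, Nat.cast_one, add_sub_cancel_right]
  exact ⟨by rw [hclosed, sum_geom_mul_one_sub_zpow hpq hq0, zpow_natCast], hclosed⟩

theorem stmt14 {Ω : Type*} [MeasurableSpace Ω] (P : Measure Ω)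
    [IsProbabilityMeasure P]
    (β p q : ℝ) (hβ0 : 0 < β) (hβ : β ≤ 1/2)
    (hp0 : 0 < p) (hp1 : p < 1) (hq : q = 1 - p)
    (X : ℕ → Ω → ℝ) (hmX : ∀ k, Measurable (X k))
    (x : ℝ) (hx : x < 0) (n : ℕ)
    (u : ℤ → ℝ) (hu : ∀ m : ℤ, u m = 1 + β ^ m * x)
    (ψ : ℝ)
    (jn : ℕ) (hjn1 : 0 < u ((n : ℤ) - jn)) (hjn2 : u ((n : ℤ) - (jn + 1)) ≤ 0)
    (hmarg : ∀ k : ℕ, ∀ i : ℕ, (i : ℤ) ≤ jn →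
      (P {ω | X k ω ≤ u ((n : ℤ) - i)}).toReal = 1 - q ^ ((n : ℤ) - i) * ψ)
    (hrec : ∀ s i : ℕ, 2 ≤ s → (i : ℤ) + 1 ≤ jn →
      (P {ω | (∀ k < s, X k ω ≤ u n) ∧ X (s-1) ω ≤ u ((n : ℤ) - i)}).toReal =
        p * (P {ω | ∀ k < s - 1, X k ω ≤ u n}).toReal +
          q * (P {ω | (∀ k < s - 1, X k ω ≤ u n) ∧
                X (s-1-1) ω ≤ u ((n : ℤ) - (i + 1))}).toReal) :
    ∀ s : ℕ, 2 ≤ s → s ≤ jn + 1 →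
      (P {ω | ∀ k < s, X k ω ≤ u n}).toReal =
        (∑ i ∈ Finset.range (s - 1),
          p * q ^ i * (1 - q ^ ((n : ℤ) - i) * ψ)) +
          q ^ (s - 1) * (1 - q ^ ((n : ℤ) - (s - 1 : ℕ)) * ψ) ∧
      (P {ω | ∀ k < s, X k ω ≤ u n}).toReal =
        1 - (p * ((s : ℝ) - 1) + 1) * q ^ n * ψ :=
  stmt14_general P β p q hβ0 hβ hp1 hq X x hx n u hu ψ jn hmarg hrec
end

section
/- If a_n = 1 − (p·j_n + 1)·q^n·c for a constant c > 0, where j_n = O(n) with j_n → ∞, and r_n = ⌊⌊q^{−n}⌋ / j_n⌋, then a_n^{r_n} → exp(−p·c) as n → ∞. -/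
/-!
Since `x := (p j + 1) q^n c → 0`, we have `log (1 - x) = -x (1 + o(1))`, so `(1 - x)^r → exp (-L)`
as soon as `r x → L`. Because `j = O(n)`, `s := q^{-n} / j → ∞`, hence `r = ⌊s⌋ ~ s` and
`r x ~ s x = (p + 1/j) c → p c`.
-/

open Filter Real Topology Asymptotics

theorem tendsto_one_sub_pow_exp_of_tendsto_mul {α : Type*} {l : Filter α} {x : α → ℝ}
    {r : α → ℕ} {t : ℝ} (hx : Tendsto x l (𝓝 0)) (hrx : Tendsto (fun a ↦ r a * x a) l (𝓝 t)) :
    Tendsto (fun a ↦ (1 - x a) ^ r a) l (𝓝 (exp (-t))) := by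
  have hlog : (fun y : ℝ ↦ log (1 - y) + y) =o[𝓝 0] fun y ↦ y := by
    simpa [sub_eq_add_neg] using hasDerivAt_iff_isLittleO_nhds_zero.mp
      (((hasDerivAt_id (0 : ℝ)).const_sub 1).log (by norm_num))
  have herr : Tendsto (fun a ↦ r a * (log (1 - x a) + x a)) l (𝓝 0) :=
    ((isBigO_refl (fun a ↦ (r a : ℝ)) l).mul_isLittleO (hlog.comp_tendsto hx)
      |>.trans_isBigO (hrx.isBigO_one ℝ)).tendsto_div_nhds_zero.congr fun a ↦ div_one _
  have hmain : Tendsto (fun a ↦ r a * log (1 - x a)) l (𝓝 (-t)) := by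
    simpa [mul_add] using herr.sub hrx
  refine ((continuous_exp.tendsto _).comp hmain).congr' ?_
  filter_upwards [hx.eventually (gt_mem_nhds one_pos)] with a ha
  rw [Function.comp_apply, exp_nat_mul, exp_log (by linarith)]

theorem tendsto_natFloor_mul_of_tendsto_mul {α : Type*} {l : Filter α} {s y : α → ℝ} {t : ℝ}
    (hs : Tendsto s l atTop) (hsy : Tendsto (fun a ↦ s a * y a) l (𝓝 t)) :
    Tendsto (fun a ↦ ⌊s a⌋₊ * y a) l (𝓝 t) := by
  have := ((tendsto_nat_floor_div_atTop (R := ℝ)).comp hs).mul hsy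
  rw [one_mul] at this
  refine this.congr' ?_
  filter_upwards [hs.eventually_ne_atTop 0] with a ha
  simp only [Function.comp_apply]
  field_simp

theorem tendsto_mul_pow_of_le_mul_succ {q C : ℝ} (hq0 : 0 ≤ q) (hq1 : q < 1) {f : ℕ → ℝ}
    (hf0 : ∀ n, 0 ≤ f n) (hf : ∀ n, f n ≤ C * (n + 1)) :
    Tendsto (fun n ↦ f n * q ^ n) atTop (𝓝 0) := by
  have hlin : Tendsto (fun n : ℕ ↦ C * (n + 1) * q ^ n) atTop (𝓝 0) := by
    have h1 := tendsto_self_mul_const_pow_of_lt_one hq0 hq1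
    have h2 := tendsto_pow_atTop_nhds_zero_of_lt_one hq0 hq1
    simpa [add_mul, mul_assoc] using (h1.add h2).const_mul C
  refine squeeze_zero (fun n ↦ by have := hf0 n; positivity) (fun n ↦ ?_) hlin
  exact mul_le_mul_of_nonneg_right (hf n) (by positivity)

theorem stmt15_general (p q c : ℝ)
    (hq0 : 0 < q) (hq1 : q < 1)
    (j : ℕ → ℕ)
    (hjO : ∃ C : ℝ, ∀ n : ℕ, (j n : ℝ) ≤ C * (n + 1))
    (hjtop : Filter.Tendsto (fun n => (j n : ℝ)) Filter.atTop Filter.atTop) :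
    Filter.Tendsto
      (fun n : ℕ => (1 - (p * j n + 1) * q ^ n * c) ^ (⌊((1 : ℝ) / q) ^ n⌋₊ / j n))
      Filter.atTop (nhds (Real.exp (-(p * c)))) := by
  obtain ⟨C, hC⟩ := hjO
  have hjq : Tendsto (fun n ↦ (j n : ℝ) * q ^ n) atTop (𝓝 0) :=
    tendsto_mul_pow_of_le_mul_succ hq0.le hq1 (fun n ↦ (j n).cast_nonneg) hC
  have hjq_pos : ∀ᶠ n in atTop, 0 < (j n : ℝ) * q ^ n := by
    filter_upwards [hjtop.eventually_gt_atTop 0] with n hn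
    positivity
  have hs : Tendsto (fun n ↦ ((1 : ℝ) / q) ^ n / j n) atTop atTop := by
    refine (tendsto_inv_nhdsGT_zero.comp (tendsto_nhdsWithin_iff.2 ⟨hjq, hjq_pos⟩)).congr fun n ↦ ?_
    simp [mul_comm, div_eq_mul_inv]
  have hx : Tendsto (fun n ↦ (p * j n + 1) * q ^ n * c) atTop (𝓝 0) := by
    have := ((hjq.const_mul p).add (tendsto_pow_atTop_nhds_zero_of_lt_one hq0.le hq1)).mul_const c
    simpa [add_mul, mul_assoc] using this
  have hsx : Tendsto (fun n ↦ ((1 : ℝ) / q) ^ n / j n * ((p * j n + 1) * q ^ n * c)) atTop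
      (𝓝 (p * c)) := by
    have := (hjtop.inv_tendsto_atTop.const_add p).mul_const c
    rw [add_zero] at this
    refine this.congr' ?_
    filter_upwards [hjtop.eventually_gt_atTop 0] with n hn
    simp only [Pi.inv_apply, one_div, inv_pow]
    field_simp
  simpa only [Nat.floor_div_natCast] using
    tendsto_one_sub_pow_exp_of_tendsto_mul hx (tendsto_natFloor_mul_of_tendsto_mul hs hsx)

theorem stmt15 (p q c : ℝ) (hp0 : 0 < p) (hp1 : p < 1)
    (hq0 : 0 < q) (hq1 : q < 1) (hc : 0 < c)
    (j : ℕ → ℕ) (hjpos : ∀ n, 0 < j n)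
    (hjO : ∃ C : ℝ, ∀ n : ℕ, (j n : ℝ) ≤ C * (n + 1))
    (hjtop : Filter.Tendsto (fun n => (j n : ℝ)) Filter.atTop Filter.atTop) :
    Filter.Tendsto
      (fun n : ℕ => (1 - (p * j n + 1) * q ^ n * c) ^ (⌊((1 : ℝ) / q) ^ n⌋₊ / j n))
      Filter.atTop (nhds (Real.exp (-(p * c)))) :=
  stmt15_general p q c hq0 hq1 j hjO hjtop
end

section
/- Let f_β : [0,1] → ℝ be defined by f_β(x) = x/β for 0 ≤ x < 1−β and f_β(x) = x/β + 1 − 1/β for 1−β ≤ x ≤ 1, and let μ be the Stieltjes measure on [0,1] induced by F_{β,p}. Then μ is f_β-invariant: μ(f_β^{−1}(A)) = μ(A) for every Borel set A ⊆ [0,1]. -/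
/-!
Monotonicity and the functional equation force `F = 0` on `(-∞, 0]` (there `F (x / β) = F x`,
and `x / β ^ n → -∞`), and, since `F ↦ 1 - F (1 - ·)` exchanges `p` and `q`, `F = 1` on
`[1, ∞)`. On `[0, 1]` the equation then splits into `F (β y) = p F y` and
`F (β y + 1 - β) = p + q F y`. Up to the point `1 - β`, the preimage of `(a, b] ⊆ [0, 1]` is
`(β a, β b] ∪ (β a + 1 - β, β b + 1 - β]`, of mass `(p + q) (F b - F a) = μ (a, b]`. The point
`1 - β` is null because `F (1 - β) - F (β y) = p (1 - F y) → 0` as `y → 1⁻`: the left limit of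
`F` at `1` is a fixed point of `L ↦ p + q L`. Agreement on intervals extends to Borel sets.
-/

open MeasureTheory Set Filter Topology

theorem MeasureTheory.Measure.restrict_Ioc_eq_of_forall_Ioc {μ ν : Measure ℝ} {a b : ℝ}
    (hfin : μ (Ioc a b) ≠ ⊤)
    (h : ∀ c d, a ≤ c → c ≤ d → d ≤ b → μ (Ioc c d) = ν (Ioc c d)) :
    μ.restrict (Ioc a b) = ν.restrict (Ioc a b) := by
  refine Measure.ext_of_Ioc' _ _ (fun c d _ => ?_) (fun c d _ => ?_)
  · exact ne_top_of_le_ne_top hfin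
      ((Measure.restrict_apply measurableSet_Ioc).le.trans (measure_mono inter_subset_right))
  · rw [Measure.restrict_apply measurableSet_Ioc, Measure.restrict_apply measurableSet_Ioc,
      Ioc_inter_Ioc]
    rcases le_or_gt (c ⊔ a) (d ⊓ b) with hcd | hcd
    · exact h _ _ le_sup_right hcd inf_le_right
    · simp [Ioc_eq_empty_of_le hcd.le]

theorem MeasureTheory.Measure.restrict_Ioc_apply_of_subset_Icc {μ : Measure ℝ} {a b : ℝ}
    {A : Set ℝ} (hA : MeasurableSet A) (hAab : A ⊆ Icc a b) (ha : μ {a} = 0) :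
    μ.restrict (Ioc a b) A = μ A := by
  have hdiff : A ∩ Ioc a b = A \ {a} := by
    ext x
    constructor
    · rintro ⟨hx, hxa, -⟩; exact ⟨hx, hxa.ne'⟩
    · rintro ⟨hx, hxa⟩; exact ⟨hx, lt_of_le_of_ne (hAab hx).1 (Ne.symm hxa), (hAab hx).2⟩
  rw [Measure.restrict_apply hA, hdiff, measure_sdiff_null ha]

noncomputable def twoBranchMap (β x : ℝ) : ℝ := if x < 1 - β then x / β else x / β + 1 - 1 / β

theorem measurable_twoBranchMap (β : ℝ) : Measurable (twoBranchMap β) :=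
  Measurable.ite (measurableSet_lt measurable_id measurable_const) (by fun_prop) (by fun_prop)

theorem twoBranchMap_preimage_zero_subset {β : ℝ} (hβ0 : 0 < β) :
    twoBranchMap β ⁻¹' {0} ⊆ {0, 1 - β} := by
  intro x hx
  simp only [mem_preimage, mem_singleton_iff, twoBranchMap] at hx
  split_ifs at hx
  · left; simpa [hβ0.ne'] using hx
  · right; field_simp at hx; simp only [mem_singleton_iff]; linarith

theorem twoBranchMap_preimage_Ioc_inter_Icc {β a b : ℝ} (hβ0 : 0 < β) (hβ : β ≤ 1 / 2)
    (ha : 0 ≤ a) (hb : b ≤ 1) :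
    twoBranchMap β ⁻¹' Ioc a b ∩ Icc 0 1 =
      (Ioc (β * a) (β * b) \ {1 - β}) ∪ Ioc (β * a + (1 - β)) (β * b + (1 - β)) := by
  have hβa : 0 ≤ β * a := mul_nonneg hβ0.le ha
  have hβb : β * b ≤ β := by nlinarith
  ext x
  simp only [twoBranchMap, mem_inter_iff, mem_preimage, mem_Ioc, mem_Icc, mem_union,
    Set.mem_sdiff, mem_singleton_iff]
  split_ifs with hx
  · rw [lt_div_iff₀ hβ0, div_le_iff₀ hβ0]
    constructor
    · rintro ⟨⟨h₁, h₂⟩, -⟩; exact Or.inl ⟨⟨by linarith, by linarith⟩, hx.ne⟩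
    · rintro (⟨⟨h₁, h₂⟩, -⟩ | ⟨h₁, -⟩) <;>
        exact ⟨⟨by linarith, by linarith⟩, by linarith, by linarith⟩
  · have e : x / β + 1 - 1 / β = (x - (1 - β)) / β := by field_simp; ring
    rw [e, lt_div_iff₀ hβ0, div_le_iff₀ hβ0]
    constructor
    · rintro ⟨⟨h₁, h₂⟩, -⟩; exact Or.inr ⟨by linarith, by linarith⟩
    · rintro (⟨⟨h₁, h₂⟩, h₃⟩ | ⟨h₁, h₂⟩)
      · exact absurd (lt_of_le_of_ne (by linarith) h₃) hx
      · exact ⟨⟨by linarith, by linarith⟩, by linarith, by linarith⟩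

def IsSelfSimilar (β p q : ℝ) (F : ℝ → ℝ) : Prop :=
  ∀ x, F x = p * F (x / β) + q * F (x / β + 1 - 1 / β)

namespace IsSelfSimilar

variable {β p q : ℝ} {F : ℝ → ℝ}

theorem reflect (hF : IsSelfSimilar β p q F) (hpq : p + q = 1) :
    IsSelfSimilar β q p (fun y => 1 - F (1 - y)) := by
  intro y
  show 1 - F (1 - y) = q * (1 - F (1 - y / β)) + p * (1 - F (1 - (y / β + 1 - 1 / β)))
  have e₁ : (1 - y) / β = 1 - (y / β + 1 - 1 / β) := by ring
  have e₂ : (1 - y) / β + 1 - 1 / β = 1 - y / β := by ring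
  rw [hF (1 - y), e₂, e₁]
  linear_combination -hpq

theorem eqOn_zero_Iic (hF : IsSelfSimilar β p q F) (hβ0 : 0 < β) (hβ1 : β < 1)
    (hq0 : 0 < q) (hpq : p + q = 1) (hmono : Monotone F)
    (hbot : Tendsto F atBot (𝓝 0)) : EqOn F 0 (Iic 0) := by
  have hβinv : 1 < β⁻¹ := one_lt_inv₀ hβ0 |>.mpr hβ1
  -- `F x` is an average of `F (x / β)` and of `F` at a smaller point, while `x / β ≤ x`.
  have hscale : ∀ x < 0, F (β⁻¹ * x) = F x := by
    intro x hx
    refine le_antisymm (hmono (by nlinarith)) ?_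
    have hle : F (x / β + 1 - 1 / β) ≤ F (x / β) := hmono (by linarith [hβinv, one_div β])
    rw [hF x, div_eq_inv_mul]
    rw [div_eq_inv_mul] at hle
    linear_combination mul_le_mul_of_nonneg_left hle hq0.le + F (β⁻¹ * x) * hpq
  have hneg : ∀ x < 0, F x = 0 := by
    intro x hx
    have hiter : ∀ n : ℕ, F (β⁻¹ ^ n * x) = F x := by
      intro n
      induction n with
      | zero => simp
      | succ n ih =>
        rw [pow_succ', mul_assoc, hscale _ (mul_neg_of_pos_of_neg (by positivity) hx), ih]
    have hlim : Tendsto (fun n : ℕ => F (β⁻¹ ^ n * x)) atTop (𝓝 0) :=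
      hbot.comp ((tendsto_pow_atTop_atTop_of_one_lt hβinv).atTop_mul_const_of_neg hx)
    simp only [hiter] at hlim
    exact tendsto_nhds_unique tendsto_const_nhds hlim
  intro x hx
  rcases (mem_Iic.mp hx).lt_or_eq with hx | rfl
  · exact hneg x hx
  · have h0 := hF 0
    rw [zero_div, zero_add, hneg (1 - 1 / β) (by linarith [hβinv, one_div β])] at h0
    have : q * F 0 = 0 := by linear_combination h0 + F 0 * hpq
    exact (mul_eq_zero.mp this).resolve_left hq0.ne'

theorem eqOn_one_Ici (hF : IsSelfSimilar β p q F) (hβ0 : 0 < β) (hβ1 : β < 1)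
    (hp0 : 0 < p) (hpq : p + q = 1) (hmono : Monotone F)
    (htop : Tendsto F atTop (𝓝 1)) : EqOn F 1 (Ici 1) := by
  have hG_mono : Monotone fun y => 1 - F (1 - y) :=
    fun a b hab => sub_le_sub_left (hmono (by linarith)) 1
  have hG_bot : Tendsto (fun y => 1 - F (1 - y)) atBot (𝓝 0) := by
    have h : Tendsto (fun y : ℝ => 1 - y) atBot atTop :=
      tendsto_atBot_atTop.mpr fun b => ⟨1 - b, fun y hy => by linarith⟩
    simpa using (htop.comp h).const_sub 1
  have hG := (hF.reflect hpq).eqOn_zero_Iic hβ0 hβ1 hp0 (by linarith) hG_mono hG_bot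
  intro x hx
  have := hG (show 1 - x ≤ 0 by linarith [mem_Ici.mp hx])
  simp only [sub_sub_cancel, Pi.zero_apply, Pi.one_apply] at this ⊢
  linarith

theorem apply_mul (hF : IsSelfSimilar β p q F) (hβ0 : 0 < β) (hβ : β ≤ 1 / 2)
    (h0 : EqOn F 0 (Iic 0)) {y : ℝ} (hy : y ≤ 1) : F (β * y) = p * F y := by
  have hβ2 : 2 ≤ 1 / β := by rw [le_div_iff₀ hβ0]; linarith
  have e : β * y / β = y := by field_simp
  rw [hF, e, h0 (show y + 1 - 1 / β ≤ 0 by linarith), Pi.zero_apply, mul_zero, add_zero]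

theorem apply_mul_add (hF : IsSelfSimilar β p q F) (hβ0 : 0 < β) (hβ : β ≤ 1 / 2)
    (h1 : EqOn F 1 (Ici 1)) {y : ℝ} (hy : 0 ≤ y) : F (β * y + (1 - β)) = p + q * F y := by
  have hβ2 : 2 ≤ 1 / β := by rw [le_div_iff₀ hβ0]; linarith
  have e₁ : (β * y + (1 - β)) / β = y + 1 / β - 1 := by field_simp; ring
  have e₂ : y + 1 / β - 1 + 1 - 1 / β = y := by ring
  rw [hF, e₁, e₂, h1 (show 1 ≤ y + 1 / β - 1 by linarith), Pi.one_apply, mul_one]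

theorem tendsto_nhdsLT_one (hF : IsSelfSimilar β p q F) (hβ0 : 0 < β) (hβ : β ≤ 1 / 2)
    (hp0 : 0 < p) (hpq : p + q = 1) (hmono : Monotone F) (h1 : EqOn F 1 (Ici 1)) :
    Tendsto F (𝓝[<] 1) (𝓝 1) := by
  set L := sSup (F '' Iio 1)
  have hL : Tendsto F (𝓝[<] 1) (𝓝 L) := hmono.tendsto_nhdsLT 1
  have hg : Tendsto (fun y => β * y + (1 - β)) (𝓝[<] 1) (𝓝[<] 1) := by
    refine tendsto_nhdsWithin_of_tendsto_nhds_of_eventually_within _ ?_ ?_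
    · have : Continuous (fun y : ℝ => β * y + (1 - β)) := by fun_prop
      simpa using this.tendsto' 1 _ (by ring) |>.mono_left nhdsWithin_le_nhds
    · filter_upwards [self_mem_nhdsWithin] with y hy
      rw [mem_Iio] at hy ⊢
      nlinarith
  have hscaled : Tendsto (fun y => F (β * y + (1 - β))) (𝓝[<] 1) (𝓝 (p + q * L)) := by
    refine ((hL.const_mul q).const_add p).congr' ?_
    filter_upwards [Ioo_mem_nhdsLT (show (0 : ℝ) < 1 by norm_num)] with y hy
    exact (hF.apply_mul_add hβ0 hβ h1 hy.1.le).symm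
  have hfix : L = p + q * L := tendsto_nhds_unique (hL.comp hg) hscaled
  have hL1 : L = 1 := by
    have : p * (L - 1) = 0 := by linear_combination hfix + L * hpq
    linarith [(mul_eq_zero.mp this).resolve_left hp0.ne']
  rwa [hL1] at hL

theorem measure_singleton_one_sub (hF : IsSelfSimilar β p q F) (hβ0 : 0 < β)
    (hβ : β ≤ 1 / 2) (hp0 : 0 < p) (hpq : p + q = 1) (hmono : Monotone F)
    (h0 : EqOn F 0 (Iic 0)) (h1 : EqOn F 1 (Ici 1)) {μ : Measure ℝ}
    (hμ : ∀ a b, μ (Ioc a b) = ENNReal.ofReal (F b - F a)) : μ {1 - β} = 0 := by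
  have hF₁ : F (1 - β) = p := by
    simpa [h0 (mem_Iic.mpr le_rfl)] using hF.apply_mul_add hβ0 hβ h1 le_rfl
  have hbound : ∀ y < 1, μ {1 - β} ≤ ENNReal.ofReal (p * (1 - F y)) := fun y hy =>
    calc μ {1 - β} ≤ μ (Ioc (β * y) (1 - β)) :=
          measure_mono (singleton_subset_iff.mpr ⟨by nlinarith, le_rfl⟩)
      _ = ENNReal.ofReal (p * (1 - F y)) := by
          rw [hμ, hF₁, hF.apply_mul hβ0 hβ h0 hy.le, mul_one_sub]
  have hlim : Tendsto (fun y => ENNReal.ofReal (p * (1 - F y))) (𝓝[<] 1) (𝓝 0) := by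
    have hFlim := hF.tendsto_nhdsLT_one hβ0 hβ hp0 hpq hmono h1
    simpa using ENNReal.tendsto_ofReal ((hFlim.const_sub 1).const_mul p)
  refine le_antisymm (ge_of_tendsto hlim ?_) zero_le
  filter_upwards [self_mem_nhdsWithin] with y hy
  exact hbound y hy

theorem measure_twoBranchMap_preimage_Ioc (hF : IsSelfSimilar β p q F) (hβ0 : 0 < β)
    (hβ : β ≤ 1 / 2) (hp0 : 0 < p) (hq0 : 0 < q) (hpq : p + q = 1) (hmono : Monotone F)
    (h0 : EqOn F 0 (Iic 0)) (h1 : EqOn F 1 (Ici 1)) {μ : Measure ℝ}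
    (hμ : ∀ a b, μ (Ioc a b) = ENNReal.ofReal (F b - F a)) {a b : ℝ}
    (ha : 0 ≤ a) (hab : a ≤ b) (hb : b ≤ 1) :
    μ (twoBranchMap β ⁻¹' Ioc a b ∩ Icc 0 1) = μ (Ioc a b) := by
  have hdisj :
      Disjoint (Ioc (β * a) (β * b) \ {1 - β}) (Ioc (β * a + (1 - β)) (β * b + (1 - β))) :=
    Set.disjoint_left.mpr fun x h₁ h₂ => by nlinarith [h₁.1.2, h₂.1]
  have hFab : 0 ≤ F b - F a := sub_nonneg.mpr (hmono hab)
  rw [twoBranchMap_preimage_Ioc_inter_Icc hβ0 hβ ha hb, measure_union hdisj measurableSet_Ioc,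
    measure_sdiff_null (hF.measure_singleton_one_sub hβ0 hβ hp0 hpq hmono h0 h1 hμ), hμ, hμ, hμ,
    hF.apply_mul hβ0 hβ h0 (hab.trans hb), hF.apply_mul hβ0 hβ h0 hb,
    hF.apply_mul_add hβ0 hβ h1 (ha.trans hab), hF.apply_mul_add hβ0 hβ h1 ha,
    ← ENNReal.ofReal_add (by nlinarith) (by nlinarith)]
  congr 1
  linear_combination (F b - F a) * hpq

theorem measure_twoBranchMap_preimage (hF : IsSelfSimilar β p q F) (hβ0 : 0 < β)
    (hβ : β ≤ 1 / 2) (hp0 : 0 < p) (hq0 : 0 < q) (hpq : p + q = 1) (hmono : Monotone F)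
    (h0 : EqOn F 0 (Iic 0)) (h1 : EqOn F 1 (Ici 1)) {μ : Measure ℝ}
    (hμ : ∀ a b, μ (Ioc a b) = ENNReal.ofReal (F b - F a)) {A : Set ℝ}
    (hA : MeasurableSet A) (hA01 : A ⊆ Icc 0 1) :
    μ (twoBranchMap β ⁻¹' A ∩ Icc 0 1) = μ A := by
  set ν := (μ.restrict (Icc 0 1)).map (twoBranchMap β)
  have hν : ∀ B, MeasurableSet B → ν B = μ (twoBranchMap β ⁻¹' B ∩ Icc 0 1) := fun B hB => by
    rw [Measure.map_apply (measurable_twoBranchMap β) hB,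
      Measure.restrict_apply (measurable_twoBranchMap β hB)]
  have hμ0 : μ {0} = 0 := by
    refine le_antisymm ?_ zero_le
    calc μ {0} ≤ μ (Ioc (-1) 0) :=
          measure_mono (singleton_subset_iff.mpr ⟨by norm_num, le_rfl⟩)
      _ = 0 := by
          rw [hμ, h0 (mem_Iic.mpr le_rfl), h0 (show (-1 : ℝ) ∈ Iic 0 by norm_num)]; simp
  have hν0 : ν {0} = 0 := by
    rw [hν _ (measurableSet_singleton 0)]
    refine measure_mono_null
      (inter_subset_left.trans (twoBranchMap_preimage_zero_subset hβ0)) ?_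
    exact measure_union_null hμ0 (hF.measure_singleton_one_sub hβ0 hβ hp0 hpq hmono h0 h1 hμ)
  have hrestrict : ν.restrict (Ioc 0 1) = μ.restrict (Ioc 0 1) := by
    refine Measure.restrict_Ioc_eq_of_forall_Ioc ?_ fun c d hc hcd hd => ?_
    · rw [hν _ measurableSet_Ioc, hF.measure_twoBranchMap_preimage_Ioc hβ0 hβ hp0 hq0 hpq hmono
        h0 h1 hμ le_rfl zero_le_one le_rfl, hμ]
      exact ENNReal.ofReal_ne_top
    · rw [hν _ measurableSet_Ioc]
      exact hF.measure_twoBranchMap_preimage_Ioc hβ0 hβ hp0 hq0 hpq hmono h0 h1 hμ hc hcd hd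
  rw [← hν A hA, ← Measure.restrict_Ioc_apply_of_subset_Icc hA hA01 hν0, hrestrict,
    Measure.restrict_Ioc_apply_of_subset_Icc hA hA01 hμ0]

end IsSelfSimilar

theorem stmt18_general (β p q : ℝ) (hβ0 : 0 < β) (hβ : β ≤ 1/2)
    (hp0 : 0 < p) (hp1 : p < 1) (hq : q = 1 - p)
    (F : ℝ → ℝ) (hmono : Monotone F)
    (hbot : Filter.Tendsto F Filter.atBot (nhds 0))
    (htop : Filter.Tendsto F Filter.atTop (nhds 1))
    (hF : ∀ x : ℝ, F x = p * F (x / β) + q * F (x / β + 1 - 1 / β))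
    (μ : Measure ℝ)
    (hμ : ∀ a b : ℝ, μ (Set.Ioc a b) = ENNReal.ofReal (F b - F a)) :
    ∀ A : Set ℝ, MeasurableSet A → A ⊆ Set.Icc (0 : ℝ) 1 →
      μ ((fun x : ℝ => if x < 1 - β then x / β else x / β + 1 - 1 / β) ⁻¹' A ∩
          Set.Icc (0 : ℝ) 1) = μ A := by
  intro A hA hA01
  have hF : IsSelfSimilar β p q F := hF
  have hq0 : 0 < q := by linarith
  have hpq : p + q = 1 := by linarith
  have hβ1 : β < 1 := by linarith
  exact hF.measure_twoBranchMap_preimage hβ0 hβ hp0 hq0 hpq hmono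
    (hF.eqOn_zero_Iic hβ0 hβ1 hq0 hpq hmono hbot)
    (hF.eqOn_one_Ici hβ0 hβ1 hp0 hpq hmono htop) hμ hA hA01

theorem stmt18 (β p q : ℝ) (hβ0 : 0 < β) (hβ : β ≤ 1/2)
    (hp0 : 0 < p) (hp1 : p < 1) (hq : q = 1 - p)
    (hne : ¬(β = 1/2 ∧ p = 1/2))
    (F : ℝ → ℝ) (hmono : Monotone F)
    (hrc : ∀ x : ℝ, ContinuousWithinAt F (Set.Ici x) x)
    (hbot : Filter.Tendsto F Filter.atBot (nhds 0))
    (htop : Filter.Tendsto F Filter.atTop (nhds 1))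
    (hF : ∀ x : ℝ, F x = p * F (x / β) + q * F (x / β + 1 - 1 / β))
    (μ : Measure ℝ)
    (hμ : ∀ a b : ℝ, μ (Set.Ioc a b) = ENNReal.ofReal (F b - F a)) :
    ∀ A : Set ℝ, MeasurableSet A → A ⊆ Set.Icc (0 : ℝ) 1 →
      μ ((fun x : ℝ => if x < 1 - β then x / β else x / β + 1 - 1 / β) ⁻¹' A ∩
          Set.Icc (0 : ℝ) 1) = μ A :=
  stmt18_general β p q hβ0 hβ hp0 hp1 hq F hmono hbot htop hF μ hμ
end

section
/- The tail 1 − F_{β,p} is not regularly varying at x = 1: there exists x > 0 such that the limit as h → 0⁺ of (1 − F_{β,p}(1 − xh)) / (1 − F_{β,p}(1 − h)) does not exist, provided log β / log q is irrational or ν_{β,q} is non-constant. -/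
/-!
`F` vanishes on `(-∞, 0]` (the self-similarity `F x = F (x / β)` there, iterated, pushes `x`
to `-∞`). If `ν` were constant (`= ν 0 = 1`), the functional equation would give
`(1 - x) ^ α = q + p (1 - x / β) ^ α` on `[0, β]`; at `x = β` this forces `1 - β = β`, and
comparing derivatives at `0` forces `p = β`, excluded by `(β, p) ≠ (1/2, 1/2)`.
If the ratio had a limit for every `x = exp a`, sampling it along `h = exp (u - n T)`, where
`ν (log h)` does not depend on `n` by periodicity, shows `ν (a + u) = ν a * ν u`; a bounded
positive solution of this equation is `≡ 1`.
-/

open Filter Real Set Topology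

namespace SelfSimilar

variable {α β p q : ℝ} {F : ℝ → ℝ}

lemma eq_div_of_nonpos (hβ0 : 0 < β) (hβ1 : β < 1) (hq0 : 0 ≤ q) (hpq : p + q = 1)
    (hmono : Monotone F) (hF : ∀ x, F x = p * F (x / β) + q * F (x / β + 1 - 1 / β))
    {x : ℝ} (hx : x ≤ 0) : F x = F (x / β) := by
  have hle : x / β ≤ x := by
    rw [div_le_iff₀ hβ0]; nlinarith
  have hshift : F (x / β + 1 - 1 / β) ≤ F (x / β) :=
    hmono (by linarith [one_le_one_div hβ0 hβ1.le])
  refine le_antisymm ?_ (hmono hle)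
  calc F x = p * F (x / β) + q * F (x / β + 1 - 1 / β) := hF x
    _ ≤ p * F (x / β) + q * F (x / β) := by gcongr
    _ = F (x / β) := by rw [← add_mul, hpq, one_mul]

lemma eq_zero_of_neg (hβ0 : 0 < β) (hβ1 : β < 1) (hq0 : 0 ≤ q) (hpq : p + q = 1)
    (hmono : Monotone F) (hbot : Tendsto F atBot (𝓝 0))
    (hF : ∀ x, F x = p * F (x / β) + q * F (x / β + 1 - 1 / β))
    {x : ℝ} (hx : x < 0) : F x = 0 := by
  have hiter : ∀ n : ℕ, F (x * β⁻¹ ^ n) = F x := by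
    intro n
    induction n with
    | zero => simp
    | succ n ih =>
      have hneg : x * β⁻¹ ^ n ≤ 0 := mul_nonpos_of_nonpos_of_nonneg hx.le (by positivity)
      rw [← ih, eq_div_of_nonpos hβ0 hβ1 hq0 hpq hmono hF hneg, pow_succ, ← mul_assoc,
        div_eq_mul_inv]
  have hto : Tendsto (fun n : ℕ => x * β⁻¹ ^ n) atTop atBot :=
    (tendsto_pow_atTop_atTop_of_one_lt ((one_lt_inv₀ hβ0).2 hβ1)).const_mul_atTop_of_neg hx
  exact tendsto_nhds_unique (tendsto_const_nhds.congr fun n => (hiter n).symm) (hbot.comp hto)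

lemma eq_zero_of_nonpos (hβ0 : 0 < β) (hβ1 : β < 1) (hq0 : 0 < q) (hpq : p + q = 1)
    (hmono : Monotone F) (hbot : Tendsto F atBot (𝓝 0))
    (hF : ∀ x, F x = p * F (x / β) + q * F (x / β + 1 - 1 / β))
    {x : ℝ} (hx : x ≤ 0) : F x = 0 := by
  rcases hx.lt_or_eq with hx | rfl
  · exact eq_zero_of_neg hβ0 hβ1 hq0.le hpq hmono hbot hF hx
  have hshift : (0 : ℝ) / β + 1 - 1 / β < 0 := by
    linarith [one_lt_one_div hβ0 hβ1, zero_div β]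
  have h0 := hF 0
  rw [eq_zero_of_neg hβ0 hβ1 hq0.le hpq hmono hbot hF hshift, zero_div] at h0
  have : q * F 0 = 0 := by linear_combination h0 + F 0 * hpq
  exact (mul_eq_zero.1 this).resolve_left hq0.ne'

lemma one_sub_rpow_eqOn (hβ0 : 0 < β) (hβ : β ≤ 1 / 2) (hpq : p + q = 1)
    (hF : ∀ x, F x = p * F (x / β) + q * F (x / β + 1 - 1 / β))
    (hF0 : ∀ x ≤ 0, F x = 0) (htail : ∀ y, 0 < y → y ≤ 1 → 1 - F (1 - y) = y ^ α) :
    EqOn (fun x => (1 - x) ^ α) (fun x => q + p * (1 - x / β) ^ α) (Ico 0 β) := by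
  intro x ⟨hx0, hxβ⟩
  have hxβ1 : x / β < 1 := (div_lt_one hβ0).2 hxβ
  have h1 := htail (1 - x) (by linarith) (by linarith)
  have h2 := htail (1 - x / β) (by linarith) (by linarith [div_nonneg hx0 hβ0.le])
  have h3 : F (x / β + 1 - 1 / β) = 0 := by
    refine hF0 _ ?_
    rw [show x / β + 1 - 1 / β = (x - (1 - β)) / β by field_simp; ring]
    exact div_nonpos_of_nonpos_of_nonneg (by linarith) hβ0.le
  simp only [sub_sub_cancel] at h1 h2
  have := hF x
  rw [h3] at this
  linear_combination -this - h1 + p * h2 - hpq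

lemma hasDerivAt_one_sub_mul_rpow (c : ℝ) :
    HasDerivAt (fun x => (1 - x * c) ^ α) (-(c * α)) 0 := by
  have h := (((hasDerivAt_id (0 : ℝ)).mul_const c).const_sub 1).rpow_const (p := α)
    (Or.inl (by simp))
  simpa using h

lemma scale_eq_half_of_eqOn (hβ0 : 0 < β) (hβ1 : β < 1) (hα : 0 < α) (hqα : β ^ α = q)
    (h : EqOn (fun x => (1 - x) ^ α) (fun x => q + p * (1 - x / β) ^ α) (Icc 0 β)) :
    β = 1 / 2 := by
  have hβ := h (right_mem_Icc.2 hβ0.le)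
  simp only [div_self hβ0.ne', sub_self, zero_rpow hα.ne', mul_zero, add_zero] at hβ
  rw [← hqα, rpow_left_inj (by linarith) hβ0.le hα.ne'] at hβ
  linarith

lemma weight_eq_scale_of_eqOn (hβ0 : 0 < β) (hα : 0 < α)
    (h : EqOn (fun x => (1 - x) ^ α) (fun x => q + p * (1 - x / β) ^ α) (Icc 0 β)) :
    p = β := by
  have hf := hasDerivAt_one_sub_mul_rpow (α := α) 1
  have hg := ((hasDerivAt_one_sub_mul_rpow (α := α) β⁻¹).const_mul p).const_add q
  simp only [mul_one, one_mul] at hf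
  simp only [← div_eq_mul_inv] at hg
  have hmem : (0 : ℝ) ∈ Icc 0 β := left_mem_Icc.2 hβ0.le
  have hderiv := (uniqueDiffOn_Icc hβ0 0 hmem).eq_deriv _ hf.hasDerivWithinAt
    (hg.hasDerivWithinAt.congr (fun x hx => h hx) (h hmem))
  field_simp at hderiv
  linarith

lemma exists_ne_one_of_ne_half (hβ0 : 0 < β) (hβ : β ≤ 1 / 2) (hne : ¬(β = 1 / 2 ∧ p = 1 / 2))
    (hq0 : 0 < q) (hq1 : q < 1) (hpq : p + q = 1)
    (hF : ∀ x, F x = p * F (x / β) + q * F (x / β + 1 - 1 / β))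
    (hF0 : ∀ x ≤ 0, F x = 0) {ν : ℝ → ℝ}
    (hrep : ∀ y, 0 < y → y ≤ 1 → 1 - F (1 - y) = y ^ (log q / log β) * ν (log y)) :
    ∃ t, ν t ≠ 1 := by
  by_contra! hν
  have hβ1 : β < 1 := by linarith
  have hlogβ : log β < 0 := log_neg hβ0 hβ1
  set α := log q / log β
  have hα : 0 < α := div_pos_of_neg_of_neg (log_neg hq0 hq1) hlogβ
  have hqα : β ^ α = q := by
    rw [rpow_def_of_pos hβ0, mul_div_cancel₀ _ hlogβ.ne, exp_log hq0]
  have hEq := (one_sub_rpow_eqOn hβ0 hβ hpq hF hF0 fun y hy0 hy1 => by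
    simpa [hν] using hrep y hy0 hy1).closure
    ((continuous_rpow_const hα.le).comp (continuous_const.sub continuous_id))
    (continuous_const.add (continuous_const.mul ((continuous_rpow_const hα.le).comp
      (continuous_const.sub (continuous_id.div_const β)))))
  rw [closure_Ico hβ0.ne] at hEq
  have hhalf := scale_eq_half_of_eqOn hβ0 hβ1 hα hqα hEq
  exact hne ⟨hhalf, (weight_eq_scale_of_eqOn hβ0 hα hEq).trans hhalf⟩

end SelfSimilar

section RegularVariation

variable {G ν : ℝ → ℝ} {α T : ℝ}

lemma rpow_mul_div_eq_of_tendsto (hT : 0 < T) (hper : Function.Periodic ν T)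
    (hrep : ∀ y, 0 < y → y ≤ 1 → G y = y ^ α * ν (log y)) {x L : ℝ} (hx : 0 < x)
    (hL : Tendsto (fun h => G (x * h) / G h) (𝓝[>] 0) (𝓝 L)) (u : ℝ) :
    x ^ α * (ν (log x + u) / ν u) = L := by
  set h : ℕ → ℝ := fun n => exp (u - n * T)
  have hlog : Tendsto (fun n : ℕ => u - n * T) atTop atBot := by
    simpa only [sub_eq_add_neg, Function.comp_def] using tendsto_atBot_add_const_left _ u
      (tendsto_neg_atTop_atBot.comp (tendsto_natCast_atTop_atTop.atTop_mul_const hT))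
  have hto : Tendsto h atTop (𝓝[>] 0) :=
    tendsto_nhdsWithin_iff.2 ⟨tendsto_exp_atBot.comp hlog, .of_forall fun n => exp_pos _⟩
  have hsmall : ∀ᶠ n in atTop, h n < min 1 x⁻¹ :=
    (hto.mono_right nhdsWithin_le_nhds).eventually_lt_const (by positivity)
  have hconst : ∀ᶠ n in atTop, G (x * h n) / G (h n) = x ^ α * (ν (log x + u) / ν u) := by
    filter_upwards [hsmall] with n hn
    have hh : 0 < h n := exp_pos _
    have hxh : x * h n ≤ 1 := by
      rw [← le_div_iff₀' hx, one_div]; exact (hn.trans_le (min_le_right _ _)).le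
    have hlogh : log (h n) = u - n * T := log_exp _
    have hlogxh : log (x * h n) = log x + u - n * T := by
      rw [log_mul hx.ne' hh.ne', hlogh]; ring
    rw [hrep _ (mul_pos hx hh) hxh, hrep _ hh (hn.trans_le (min_le_left _ _)).le, hlogxh,
      hlogh, hper.sub_nat_mul_eq, hper.sub_nat_mul_eq, mul_rpow hx.le hh.le, mul_comm (x ^ α),
      mul_assoc, mul_div_mul_left _ _ (rpow_pos_of_pos hh α).ne', mul_div_assoc]
  exact tendsto_nhds_unique (tendsto_const_nhds.congr' (hconst.mono fun n hn => hn.symm))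
    (hL.comp hto)

lemma map_add_eq_mul_of_tendsto (hT : 0 < T) (hper : Function.Periodic ν T)
    (hrep : ∀ y, 0 < y → y ≤ 1 → G y = y ^ α * ν (log y)) (hpos : ∀ t, 0 < ν t) (hν0 : ν 0 = 1)
    (hlim : ∀ x, 0 < x → ∃ L, Tendsto (fun h => G (x * h) / G h) (𝓝[>] 0) (𝓝 L)) (a u : ℝ) :
    ν (a + u) = ν a * ν u := by
  obtain ⟨L, hL⟩ := hlim (exp a) (exp_pos a)
  have hu := rpow_mul_div_eq_of_tendsto hT hper hrep (exp_pos a) hL u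
  have h0 := rpow_mul_div_eq_of_tendsto hT hper hrep (exp_pos a) hL 0
  rw [log_exp] at hu h0
  rw [add_zero, hν0, div_one, ← hu] at h0
  rw [mul_left_cancel₀ (rpow_pos_of_pos (exp_pos a) α).ne' h0, div_mul_cancel₀ _ (hpos u).ne']

end RegularVariation

lemma eq_one_of_map_add_eq_mul {ν : ℝ → ℝ} (hpos : ∀ t, 0 < ν t) (hbdd : ∃ M, ∀ t, ν t ≤ M)
    (hmul : ∀ a u, ν (a + u) = ν a * ν u) (t : ℝ) : ν t = 1 := by
  obtain ⟨M, hM⟩ := hbdd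
  have hν0 : ν 0 = 1 := by
    have h := hmul 0 0
    rw [add_zero] at h
    exact (mul_eq_left₀ (hpos 0).ne').1 h.symm
  have hle : ∀ u, ν u ≤ 1 := by
    intro u
    by_contra! hgt
    have hpow : ∀ n : ℕ, ν (n * u) = ν u ^ n := by
      intro n
      induction n with
      | zero => simpa using hν0
      | succ n ih => rw [Nat.cast_succ, add_one_mul, hmul, ih, pow_succ]
    obtain ⟨n, hn⟩ := pow_unbounded_of_one_lt M hgt
    linarith [hM (n * u), hpow n]
  have hinv := hmul t (-t)
  rw [add_neg_cancel, hν0] at hinv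
  refine le_antisymm (hle t) ?_
  nlinarith [hle (-t), hpos t, hpos (-t)]

theorem stmt19_general (β p q : ℝ) (hβ0 : 0 < β) (hβ : β ≤ 1/2)
    (hp0 : 0 < p) (hp1 : p < 1) (hq : q = 1 - p)
    (hne : ¬(β = 1/2 ∧ p = 1/2))
    (F ν : ℝ → ℝ) (hmono : Monotone F)
    (hbot : Filter.Tendsto F Filter.atBot (nhds 0))
    (hF : ∀ x : ℝ, F x = p * F (x / β) + q * F (x / β + 1 - 1 / β))
    (hνpos : ∀ t : ℝ, 0 < ν t) (hνbdd : ∃ M : ℝ, ∀ t : ℝ, ν t ≤ M)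
    (hνper : ∀ t : ℝ, ν (t + |Real.log β|) = ν t)
    (hrep : ∀ y : ℝ, 0 < y → y ≤ 1 →
      1 - F (1 - y) = y ^ (Real.log q / Real.log β) * ν (Real.log y)) :
    ∃ x : ℝ, 0 < x ∧
      ¬ ∃ L : ℝ, Filter.Tendsto
        (fun h : ℝ => (1 - F (1 - x * h)) / (1 - F (1 - h)))
        (nhdsWithin 0 (Set.Ioi 0)) (nhds L) := by
  have hβ1 : β < 1 := by linarith
  have hq0 : 0 < q := by linarith
  have hpq : p + q = 1 := by linarith
  have hF0 : ∀ x ≤ 0, F x = 0 := fun x hx =>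
    SelfSimilar.eq_zero_of_nonpos hβ0 hβ1 hq0 hpq hmono hbot hF hx
  have hν0 : ν 0 = 1 := by simpa [hF0 0 le_rfl] using (hrep 1 one_pos le_rfl).symm
  obtain ⟨t, ht⟩ := SelfSimilar.exists_ne_one_of_ne_half hβ0 hβ hne hq0 (by linarith) hpq hF hF0 hrep
  by_contra! hlim
  have hper : Function.Periodic ν (-log β) := fun t => by
    simpa only [abs_of_neg (log_neg hβ0 hβ1)] using hνper t
  exact ht (eq_one_of_map_add_eq_mul hνpos hνbdd (map_add_eq_mul_of_tendsto
    (neg_pos.2 (log_neg hβ0 hβ1)) hper hrep hνpos hν0 hlim) t)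

theorem stmt19 (β p q : ℝ) (hβ0 : 0 < β) (hβ : β ≤ 1/2)
    (hp0 : 0 < p) (hp1 : p < 1) (hq : q = 1 - p)
    (hne : ¬(β = 1/2 ∧ p = 1/2))
    (F ν : ℝ → ℝ) (hmono : Monotone F)
    (hrc : ∀ x : ℝ, ContinuousWithinAt F (Set.Ici x) x)
    (hbot : Filter.Tendsto F Filter.atBot (nhds 0))
    (htop : Filter.Tendsto F Filter.atTop (nhds 1))
    (hF : ∀ x : ℝ, F x = p * F (x / β) + q * F (x / β + 1 - 1 / β))
    (hνpos : ∀ t : ℝ, 0 < ν t) (hνbdd : ∃ M : ℝ, ∀ t : ℝ, ν t ≤ M)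
    (hνper : ∀ t : ℝ, ν (t + |Real.log β|) = ν t)
    (hrep : ∀ y : ℝ, 0 < y → y ≤ 1 →
      1 - F (1 - y) = y ^ (Real.log q / Real.log β) * ν (Real.log y))
    (hprov : Irrational (Real.log β / Real.log q) ∨ ∃ s t : ℝ, ν s ≠ ν t) :
    ∃ x : ℝ, 0 < x ∧
      ¬ ∃ L : ℝ, Filter.Tendsto
        (fun h : ℝ => (1 - F (1 - x * h)) / (1 - F (1 - h)))
        (nhdsWithin 0 (Set.Ioi 0)) (nhds L) :=
  stmt19_general β p q hβ0 hβ hp0 hp1 hq hne F ν hmono hbot hF hνpos hνbdd hνper hrep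
end
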